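/- arXiv:2412.15155 — 6 statements merged into one kernel-verified Lean document; each statement's English description precedes it below -/
import Mathlib

section
/- Let 0 < k < n, identify ℝⁿ = ℝᵏ × ℝ^{n−k}, let U ⊆ ℝᵏ be open and φ : U → ℝ^{n−k} be differentiable at x ∈ U, and set p = (x, φ(x)). Define α : U → ℝ^{n−k} by φ(z) = φ(x) + Dφ(x)(z − x) + |z − x| α(z) for z ≠ x and α(x) = 0. Then for every r > 0, every z ∈ U, and every unit vector ν ∈ ℝⁿ orthogonal to the span of the vectors ē_i = (e_i, ∂φ/∂xⁱ(x)), i = 1,…,k, one has |p + rν − (z, φ(z))|² ≥ r²(1 − |α(z)|²). -/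
/-!
Write `(z, φ z) - p = q = t + s` with `t = (z - x, Dφ(x)(z - x))` tangent to the graph and
`s = (0, ‖z - x‖ α z)`. As `ν ⊥ t`, `⟪q, ν⟫ = ⟪s, ν⟫ ≤ ‖z - x‖ ‖α z‖ ≤ ‖α z‖ ‖q‖`, and
expanding `‖r ν - q‖²` and completing the square gives the bound.
-/

open Metric Set Filter
open scoped RealInnerProductSpace

noncomputable section

/-- `ℝᵏ` as a Euclidean space. -/
abbrev Ek (k : ℕ) : Type := EuclideanSpace ℝ (Fin k)

/-- `ℝⁿ` identified with `ℝᵏ × ℝ^{n-k}`, with the Euclidean (L²) norm. -/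
abbrev Pk (k m : ℕ) : Type := WithLp 2 (Ek k × Ek m)

/-- The identification of the plain product with the L²-product. -/
def emb (k m : ℕ) : Ek k × Ek m → Pk k m := (WithLp.equiv 2 (Ek k × Ek m)).symm

theorem sq_mul_one_sub_sq_le_norm_smul_sub_sq {E : Type*} [NormedAddCommGroup E]
    [InnerProductSpace ℝ E] {ν q : E} {r a : ℝ} (hν : ‖ν‖ = 1) (hr : 0 ≤ r)
    (hq : ⟪q, ν⟫ ≤ a * ‖q‖) :
    r ^ 2 * (1 - a ^ 2) ≤ ‖r • ν - q‖ ^ 2 := by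
  have hexp : ‖r • ν - q‖ ^ 2 = r ^ 2 - 2 * r * ⟪q, ν⟫ + ‖q‖ ^ 2 := by
    rw [norm_sub_sq_real, norm_smul, hν, real_inner_smul_left, real_inner_comm,
      Real.norm_of_nonneg hr]
    ring
  -- `r² - 2 r ⟪q, ν⟫ + ‖q‖² ≥ (‖q‖ - r a)² + r² (1 - a²)`
  rw [hexp]
  nlinarith [mul_le_mul_of_nonneg_left hq hr, sq_nonneg (‖q‖ - r * a)]

section Graph

variable {k m : ℕ}

theorem norm_emb_sq (a : Ek k × Ek m) : ‖emb k m a‖ ^ 2 = ‖a.1‖ ^ 2 + ‖a.2‖ ^ 2 :=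
  WithLp.prod_norm_sq_eq_of_L2 _

theorem norm_fst_le_norm_emb (a : Ek k × Ek m) : ‖a.1‖ ≤ ‖emb k m a‖ :=
  WithLp.norm_fst_le (x := emb k m a)

def embGraph (f : Ek k →L[ℝ] Ek m) : Ek k →ₗ[ℝ] Pk k m :=
  (WithLp.linearEquiv 2 ℝ (Ek k × Ek m)).symm.toLinearMap ∘ₗ LinearMap.id.prod f.toLinearMap

theorem embGraph_apply (f : Ek k →L[ℝ] Ek m) (v : Ek k) : embGraph f v = emb k m (v, f v) :=
  rfl

theorem span_range_emb_single_eq_range_embGraph (f : Ek k →L[ℝ] Ek m) :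
    Submodule.span ℝ (range fun i : Fin k =>
      emb k m (EuclideanSpace.single i 1, f (EuclideanSpace.single i 1))) =
      LinearMap.range (embGraph f) := by
  have hrange : (range fun i : Fin k =>
      emb k m (EuclideanSpace.single i 1, f (EuclideanSpace.single i 1))) =
      embGraph f '' range (EuclideanSpace.basisFun (Fin k) ℝ).toBasis := by
    rw [← range_comp]
    congr 1
    ext i : 1
    simp [embGraph_apply]
  rw [hrange, ← Submodule.map_span, (EuclideanSpace.basisFun (Fin k) ℝ).toBasis.span_eq,
    LinearMap.range_eq_map]

theorem inner_emb_le_norm_of_mem_orthogonal (f : Ek k →L[ℝ] Ek m) {ν : Pk k m} (hν : ‖ν‖ = 1)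
    (hνT : ν ∈ (Submodule.span ℝ (range fun i : Fin k =>
      emb k m (EuclideanSpace.single i 1, f (EuclideanSpace.single i 1))))ᗮ)
    (v : Ek k) (w : Ek m) :
    ⟪emb k m (v, f v + w), ν⟫ ≤ ‖w‖ := by
  rw [span_range_emb_single_eq_range_embGraph] at hνT
  have hsplit : emb k m (v, f v + w) = embGraph f v + emb k m (0, w) :=
    calc emb k m (v, f v + w) = emb k m ((v, f v) + (0, w)) := by simp
      _ = embGraph f v + emb k m (0, w) := rfl
  rw [hsplit, inner_add_left, hνT _ (LinearMap.mem_range_self _ v), zero_add]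
  calc ⟪emb k m (0, w), ν⟫ ≤ ‖emb k m (0, w)‖ * ‖ν‖ := real_inner_le_norm _ _
    _ = ‖w‖ := by
      rw [hν, mul_one, ← sq_eq_sq₀ (norm_nonneg _) (norm_nonneg _), norm_emb_sq]
      simp

end Graph

theorem statement0_general
    (k n : ℕ)
    (U : Set (Ek k))
    (φ : Ek k → Ek (n - k))
    (x : Ek k)
    (α : Ek k → Ek (n - k))
    (hα : ∀ z ∈ U, φ z = φ x + fderiv ℝ φ x (z - x) + ‖z - x‖ • α z)
    (p : Pk k (n - k)) (hp : p = emb k (n - k) (x, φ x))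
    (T : Submodule ℝ (Pk k (n - k)))
    (hT : T = Submodule.span ℝ (Set.range fun i : Fin k =>
      emb k (n - k) (EuclideanSpace.single i 1, fderiv ℝ φ x (EuclideanSpace.single i 1)))) :
    ∀ r : ℝ, 0 < r → ∀ z ∈ U, ∀ ν : Pk k (n - k), ‖ν‖ = 1 → ν ∈ Tᗮ →
      r ^ 2 * (1 - ‖α z‖ ^ 2) ≤ ‖p + r • ν - emb k (n - k) (z, φ z)‖ ^ 2 := by
  intro r hr z hz ν hν hνT
  set q := emb k (n - k) (z - x, fderiv ℝ φ x (z - x) + ‖z - x‖ • α z)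
  have hdiff : p + r • ν - emb k (n - k) (z, φ z) = r • ν - q := by
    have hφz : φ z - φ x = fderiv ℝ φ x (z - x) + ‖z - x‖ • α z := by
      rw [hα z hz]; abel
    calc p + r • ν - emb k (n - k) (z, φ z)
        = r • ν - (emb k (n - k) (z, φ z) - emb k (n - k) (x, φ x)) := by rw [hp]; abel
      _ = r • ν - emb k (n - k) ((z, φ z) - (x, φ x)) := rfl
      _ = r • ν - q := by rw [Prod.mk_sub_mk, hφz]
  have hinner : ⟪q, ν⟫ ≤ ‖α z‖ * ‖q‖ :=
    calc ⟪q, ν⟫ ≤ ‖‖z - x‖ • α z‖ := by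
          subst hT; exact inner_emb_le_norm_of_mem_orthogonal _ hν hνT _ _
      _ = ‖α z‖ * ‖z - x‖ := by rw [norm_smul, norm_norm, mul_comm]
      _ ≤ ‖α z‖ * ‖q‖ :=
          mul_le_mul_of_nonneg_left (norm_fst_le_norm_emb (z - x, _)) (norm_nonneg _)
  rw [hdiff]
  exact sq_mul_one_sub_sq_le_norm_smul_sub_sq hν hr.le hinner

/-- if `φ : U → ℝ^{n-k}` is differentiable at `x ∈ U`, `p = (x, φ x)`,
`α` is the first-order remainder of `φ` at `x`, and `T` is the tangent space to the graph
of `φ` at `p` (the span of the vectors `ē_i = (e_i, ∂φ/∂xⁱ(x))`), then for every `r > 0`,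
every `z ∈ U` and every unit vector `ν` orthogonal to `T` one has
`|p + rν − (z, φ z)|² ≥ r² (1 − |α z|²)`. -/
theorem statement0
    (k n : ℕ) (hk : 0 < k) (hkn : k < n)
    (U : Set (Ek k)) (hU : IsOpen U)
    (φ : Ek k → Ek (n - k))
    (x : Ek k) (hx : x ∈ U)
    (hφ : DifferentiableAt ℝ φ x)
    (α : Ek k → Ek (n - k))
    (hα0 : α x = 0)
    (hα : ∀ z ∈ U, φ z = φ x + fderiv ℝ φ x (z - x) + ‖z - x‖ • α z)
    (p : Pk k (n - k)) (hp : p = emb k (n - k) (x, φ x))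
    (T : Submodule ℝ (Pk k (n - k)))
    (hT : T = Submodule.span ℝ (Set.range fun i : Fin k =>
      emb k (n - k) (EuclideanSpace.single i 1, fderiv ℝ φ x (EuclideanSpace.single i 1)))) :
    ∀ r : ℝ, 0 < r → ∀ z ∈ U, ∀ ν : Pk k (n - k), ‖ν‖ = 1 → ν ∈ Tᗮ →
      r ^ 2 * (1 - ‖α z‖ ^ 2) ≤ ‖p + r • ν - emb k (n - k) (z, φ z)‖ ^ 2 :=
  statement0_general k n U φ x α hα p hp T hT
end
end

section
/- Let 0 < k < n, identify ℝⁿ = ℝᵏ × ℝ^{n−k}, let U ⊆ ℝᵏ be open, φ : U → ℝ^{n−k} be continuous and differentiable at x ∈ U, Γ = {(z, φ(z)) : z ∈ U} its graph, and p = (x, φ(x)). Then for every ε > 0 there exists δ > 0 such that dist(p + rν, Γ)² ≥ r²(1 − ε²) for all 0 < r < δ and all unit normals ν to Γ at p. -/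
/-!
Write a point of the graph as `p + w` with `w = (z - x, φ z - φ x)`. Since `ν` is orthogonal to
every `(v, Dφ(x) v)`, `⟪w, ν⟫ = ⟪φ z - φ x - Dφ(x)(z - x), ν₂⟫`, so differentiability gives
`|⟪w, ν⟫| ≤ ε ‖w‖` for `z` near `x`; then `‖r ν - w‖² ≥ r² - 2rε‖w‖ + ‖w‖² ≥ r²(1 - ε²)`.
For `z` far from `x`, `‖w‖ ≥ 2r` once `r` is small, and `‖r ν - w‖ ≥ r` by the triangle inequality.
-/

open Metric Set Filter
open scoped RealInnerProductSpace

noncomputable section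

theorem Metric.le_infDist_sq_of_forall_le_dist_sq {α : Type*} [PseudoMetricSpace α] {s : Set α}
    {y : α} {c : ℝ} (hs : s.Nonempty) (h : ∀ q ∈ s, c ≤ dist y q ^ 2) :
    c ≤ infDist y s ^ 2 := by
  by_contra! hlt
  have hc : infDist y s < √c := Real.lt_sqrt_of_sq_lt hlt
  obtain ⟨q, hq, hyq⟩ := (infDist_lt_iff hs).1 hc
  exact (h q hq).not_gt ((Real.lt_sqrt dist_nonneg).1 hyq)

section InnerProductSpace
variable {E : Type*} [NormedAddCommGroup E] [InnerProductSpace ℝ E]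

theorem mul_one_sub_sq_le_norm_smul_sub_sq {ν w : E} {r ε : ℝ} (hν : ‖ν‖ = 1)
    (hw : |⟪w, ν⟫| ≤ ε * ‖w‖) : r ^ 2 * (1 - ε ^ 2) ≤ ‖r • ν - w‖ ^ 2 := by
  have hinner : |⟪r • ν, w⟫| ≤ |r| * (ε * ‖w‖) := by
    rw [real_inner_smul_left, abs_mul, real_inner_comm]
    exact mul_le_mul_of_nonneg_left hw (abs_nonneg r)
  rw [norm_sub_sq_real, norm_smul, hν, mul_one, Real.norm_eq_abs, sq_abs]
  nlinarith [abs_le.1 hinner, sq_nonneg (‖w‖ - |r| * ε), sq_abs r]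

theorem sq_le_norm_smul_sub_sq {ν w : E} {r : ℝ} (hν : ‖ν‖ = 1) (hr : 0 ≤ r)
    (hw : 2 * r ≤ ‖w‖) : r ^ 2 ≤ ‖r • ν - w‖ ^ 2 := by
  have h : ‖w‖ - ‖r • ν‖ ≤ ‖r • ν - w‖ := norm_sub_rev w (r • ν) ▸ norm_sub_norm_le w (r • ν)
  rw [norm_smul, hν, mul_one, Real.norm_of_nonneg hr] at h
  nlinarith

end InnerProductSpace

section Graph
variable {E F : Type*} [NormedAddCommGroup E] [InnerProductSpace ℝ E]
  [NormedAddCommGroup F] [InnerProductSpace ℝ F]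

theorem WithLp.inner_toLp_eq_inner_sub_snd {D : E →L[ℝ] F} {ν : WithLp 2 (E × F)}
    (hν : ∀ v, ⟪WithLp.toLp 2 (v, D v), ν⟫ = 0) (a : E) (b : F) :
    ⟪WithLp.toLp 2 (a, b), ν⟫ = ⟪b - D a, ν.snd⟫ := by
  have h := hν a
  simp only [WithLp.prod_inner_apply, WithLp.ofLp_fst, WithLp.ofLp_snd] at h ⊢
  rw [inner_sub_left]
  linarith

theorem mul_one_sub_sq_le_dist_graph_sq {φ : E → F} {D : E →L[ℝ] F} {x z : E}
    {ν : WithLp 2 (E × F)} {r ε δ : ℝ} (hν : ‖ν‖ = 1)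
    (horth : ∀ v, ⟪WithLp.toLp 2 (v, D v), ν⟫ = 0) (hr : 0 ≤ r) (hε : 0 ≤ ε) (hrδ : 2 * r ≤ δ)
    (hφ : ‖z - x‖ < δ → ‖φ z - φ x - D (z - x)‖ ≤ ε * ‖z - x‖) :
    r ^ 2 * (1 - ε ^ 2) ≤
      dist (WithLp.toLp 2 (x, φ x) + r • ν) (WithLp.toLp 2 (z, φ z)) ^ 2 := by
  set w : WithLp 2 (E × F) := WithLp.toLp 2 (z - x, φ z - φ x)
  have hdist : dist (WithLp.toLp 2 (x, φ x) + r • ν) (WithLp.toLp 2 (z, φ z)) = ‖r • ν - w‖ := by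
    rw [dist_eq_norm, show w = WithLp.toLp 2 (z, φ z) - WithLp.toLp 2 (x, φ x) from rfl]
    abel_nf
  have hw : ‖z - x‖ ≤ ‖w‖ := WithLp.norm_fst_le E w
  rw [hdist]
  by_cases hz : ‖z - x‖ < δ
  · refine mul_one_sub_sq_le_norm_smul_sub_sq hν ?_
    calc |⟪w, ν⟫| = |⟪φ z - φ x - D (z - x), ν.snd⟫| := by
          rw [WithLp.inner_toLp_eq_inner_sub_snd horth]
      _ ≤ ‖φ z - φ x - D (z - x)‖ * ‖ν.snd‖ := abs_real_inner_le_norm _ _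
      _ ≤ ε * ‖z - x‖ * 1 := by
          gcongr
          · exact hφ hz
          · exact hν ▸ WithLp.norm_snd_le E ν
      _ ≤ ε * ‖w‖ := by rw [mul_one]; gcongr
  · calc r ^ 2 * (1 - ε ^ 2) ≤ r ^ 2 := by nlinarith
      _ ≤ ‖r • ν - w‖ ^ 2 := sq_le_norm_smul_sub_sq hν hr (by linarith)

theorem exists_pos_forall_mul_one_sub_sq_le_infDist_graph_sq {φ : E → F} {D : E →L[ℝ] F}
    {x : E} {U : Set E} (hx : x ∈ U) (hφ : HasFDerivAt φ D x) {ε : ℝ} (hε : 0 < ε) :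
    ∃ δ > 0, ∀ r : ℝ, 0 < r → r < δ → ∀ ν : WithLp 2 (E × F), ‖ν‖ = 1 →
      (∀ v, ⟪WithLp.toLp 2 (v, D v), ν⟫ = 0) →
        r ^ 2 * (1 - ε ^ 2) ≤ infDist (WithLp.toLp 2 (x, φ x) + r • ν)
          ((fun z => WithLp.toLp 2 (z, φ z)) '' U) ^ 2 := by
  obtain ⟨δ, hδ, hφδ⟩ := Metric.eventually_nhds_iff.1 (hφ.isLittleO.def hε)
  refine ⟨δ / 2, half_pos hδ, fun r hr hrδ ν hν horth => ?_⟩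
  refine le_infDist_sq_of_forall_le_dist_sq ⟨_, mem_image_of_mem _ hx⟩ ?_
  rintro _ ⟨z, -, rfl⟩
  exact mul_one_sub_sq_le_dist_graph_sq (δ := δ) hν horth hr.le hε.le (by linarith)
    fun hz => hφδ (by rwa [dist_eq_norm])

end Graph

theorem LinearMap.span_range_comp_basis_eq_range {ι R M N : Type*} [Semiring R] [AddCommMonoid M]
    [Module R M] [AddCommMonoid N] [Module R N] (b : Module.Basis ι R M) (f : M →ₗ[R] N) :
    Submodule.span R (Set.range (f ∘ b)) = LinearMap.range f := by
  rw [Set.range_comp, ← Submodule.map_span, b.span_eq, Submodule.map_top]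

def graphLinearMap {R E F : Type*} [Semiring R] [AddCommGroup E] [Module R E] [AddCommGroup F]
    [Module R F] (D : E →ₗ[R] F) : E →ₗ[R] WithLp 2 (E × F) :=
  (WithLp.linearEquiv 2 R (E × F)).symm.toLinearMap ∘ₗ LinearMap.id.prod D

theorem statement1_general
    (k n : ℕ)
    (U : Set (Ek k))
    (φ : Ek k → Ek (n - k))
    (x : Ek k) (hx : x ∈ U)
    (hφ : DifferentiableAt ℝ φ x)
    (Γ : Set (Pk k (n - k))) (hΓ : Γ = (fun z => emb k (n - k) (z, φ z)) '' U)
    (p : Pk k (n - k)) (hp : p = emb k (n - k) (x, φ x))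
    (T : Submodule ℝ (Pk k (n - k)))
    (hT : T = Submodule.span ℝ (Set.range fun i : Fin k =>
      emb k (n - k) (EuclideanSpace.single i 1, fderiv ℝ φ x (EuclideanSpace.single i 1)))) :
    ∀ ε : ℝ, 0 < ε → ∃ δ : ℝ, 0 < δ ∧ ∀ r : ℝ, 0 < r → r < δ →
      ∀ ν : Pk k (n - k), ‖ν‖ = 1 → ν ∈ Tᗮ →
        r ^ 2 * (1 - ε ^ 2) ≤ (Metric.infDist (p + r • ν) Γ) ^ 2 := by
  intro ε hε
  obtain ⟨δ, hδ, hgraph⟩ :=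
    exists_pos_forall_mul_one_sub_sq_le_infDist_graph_sq hx hφ.hasFDerivAt hε
  refine ⟨δ, hδ, fun r hr hrδ ν hν hνT => ?_⟩
  have hT_range : T = LinearMap.range (graphLinearMap (fderiv ℝ φ x).toLinearMap) := by
    rw [hT, ← LinearMap.span_range_comp_basis_eq_range (EuclideanSpace.basisFun (Fin k) ℝ).toBasis]
    simp only [OrthonormalBasis.coe_toBasis, Function.comp_def, EuclideanSpace.basisFun_apply]
    rfl
  subst hΓ hp
  refine hgraph r hr hrδ ν hν fun v => Submodule.inner_right_of_mem_orthogonal ?_ hνT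
  exact hT_range ▸ LinearMap.mem_range_self _ v

/-- with `φ : U → ℝ^{n-k}` continuous on the open set `U` and differentiable at
`x ∈ U`, `Γ` the graph of `φ` over `U`, `p = (x, φ x)`, and `T` the tangent space of `Γ` at `p`
(the span of the vectors `ē_i = (e_i, ∂φ/∂xⁱ(x))`): for every `ε > 0` there is `δ > 0` such
that `dist(p + rν, Γ)² ≥ r²(1 − ε²)` for all `0 < r < δ` and all unit normals `ν` to `Γ`
at `p`. -/
theorem statement1
    (k n : ℕ) (hk : 0 < k) (hkn : k < n)
    (U : Set (Ek k)) (hU : IsOpen U)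
    (φ : Ek k → Ek (n - k)) (hφc : ContinuousOn φ U)
    (x : Ek k) (hx : x ∈ U)
    (hφ : DifferentiableAt ℝ φ x)
    (Γ : Set (Pk k (n - k))) (hΓ : Γ = (fun z => emb k (n - k) (z, φ z)) '' U)
    (p : Pk k (n - k)) (hp : p = emb k (n - k) (x, φ x))
    (T : Submodule ℝ (Pk k (n - k)))
    (hT : T = Submodule.span ℝ (Set.range fun i : Fin k =>
      emb k (n - k) (EuclideanSpace.single i 1, fderiv ℝ φ x (EuclideanSpace.single i 1)))) :
    ∀ ε : ℝ, 0 < ε → ∃ δ : ℝ, 0 < δ ∧ ∀ r : ℝ, 0 < r → r < δ →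
      ∀ ν : Pk k (n - k), ‖ν‖ = 1 → ν ∈ Tᗮ →
        r ^ 2 * (1 - ε ^ 2) ≤ (Metric.infDist (p + r • ν) Γ) ^ 2 :=
  statement1_general k n U φ x hx hφ Γ hΓ p hp T hT
end
end

section
/- Let 0 < k < n, identify ℝⁿ = ℝᵏ × ℝ^{n−k}, let U ⊆ ℝᵏ be open, φ : U → ℝ^{n−k} be continuous and differentiable at x ∈ U, Γ = {(z, φ(z)) : z ∈ U} its graph, and p = (x, φ(x)). Then δ(p, r)/r → 1 as r → 0+, where δ(p, r) = inf_ν dist(p + rν, Γ) and the infimum is taken over all unit normals ν to Γ at p. -/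
open Metric Set Filter
open scoped RealInnerProductSpace

noncomputable section

/-- `δ(p, r) = inf_ν dist(p + rν, Γ)`, the infimum being over all unit vectors `ν`
orthogonal to the tangent space `T` of `Γ` at `p`. -/
def deltaFn (k m : ℕ) (Γ : Set (Pk k m)) (T : Submodule ℝ (Pk k m)) (p : Pk k m) (r : ℝ) : ℝ :=
  sInf {d : ℝ | ∃ ν : Pk k m, ‖ν‖ = 1 ∧ ν ∈ Tᗮ ∧ d = Metric.infDist (p + r • ν) Γ}

/-!
The upper bound `δ(p, r) ≤ r` comes from `p ∈ Γ`. For the lower bound, differentiability of `φ`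
at `x` writes every point `q` of `Γ` near `p` as `q = p + v + w` with `v` tangent and
`‖w‖ ≤ ε ‖v‖`. For a unit normal `ν`, Pythagoras gives `‖r ν - v‖ ≥ max r ‖v‖ ≥ (1 - ε) r + ε ‖v‖`,
hence `dist (p + r ν) q ≥ (1 - ε) r`; points of `Γ` at distance `≥ 2 r` from `p` are at distance
`≥ r` from `p + r ν`.
-/

open Topology

section InnerProductSpace

variable {E : Type*} [NormedAddCommGroup E] [InnerProductSpace ℝ E]

lemma Submodule.exists_norm_eq_one_mem {S : Submodule ℝ E} (hS : S ≠ ⊥) : ∃ ν ∈ S, ‖ν‖ = 1 := by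
  have := Submodule.nontrivial_iff_ne_bot.2 hS
  obtain ⟨ν, hν⟩ := exists_norm_eq S zero_le_one
  exact ⟨ν, ν.2, hν⟩

lemma one_sub_mul_norm_le_norm_sub_sub {u v w : E} {ε : ℝ} (hε : 0 ≤ ε) (huv : ⟪u, v⟫ = 0)
    (hw : ‖w‖ ≤ ε * ‖v‖) : (1 - ε) * ‖u‖ ≤ ‖u - v - w‖ := by
  rcases le_or_gt ε 1 with hε1 | hε1
  · have hpyth := norm_sub_sq_eq_norm_sq_add_norm_sq_real huv
    have hu : ‖u‖ ≤ ‖u - v‖ := by nlinarith [norm_nonneg u, norm_nonneg (u - v)]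
    have hv : ‖v‖ ≤ ‖u - v‖ := by nlinarith [norm_nonneg v, norm_nonneg (u - v)]
    calc (1 - ε) * ‖u‖ ≤ ‖u - v‖ - ε * ‖v‖ := by nlinarith
      _ ≤ ‖u - v‖ - ‖w‖ := by linarith
      _ ≤ ‖u - v - w‖ := norm_sub_norm_le _ _
  · exact (mul_nonpos_of_nonpos_of_nonneg (by linarith) (norm_nonneg _)).trans (norm_nonneg _)

lemma one_sub_mul_le_dist_add_smul {T : Submodule ℝ E} {p q ν v : E} {r ε : ℝ} (hr : 0 ≤ r)
    (hε : 0 ≤ ε) (hν : ‖ν‖ = 1) (hνT : ν ∈ Tᗮ) (hv : v ∈ T) (hq : ‖q - p - v‖ ≤ ε * ‖v‖) :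
    (1 - ε) * r ≤ dist (p + r • ν) q := by
  have horth : ⟪r • ν, v⟫ = 0 := by
    rw [real_inner_smul_left, real_inner_comm, Submodule.inner_right_of_mem_orthogonal hv hνT,
      mul_zero]
  have hrν : ‖r • ν‖ = r := by rw [norm_smul, hν, Real.norm_of_nonneg hr, mul_one]
  calc (1 - ε) * r = (1 - ε) * ‖r • ν‖ := by rw [hrν]
    _ ≤ ‖r • ν - v - (q - p - v)‖ := one_sub_mul_norm_le_norm_sub_sub hε horth hq
    _ = dist (p + r • ν) q := by rw [dist_eq_norm]; congr 1; abel

lemma le_dist_add_smul_of_two_mul_le_dist {p q ν : E} {r : ℝ} (hr : 0 ≤ r) (hν : ‖ν‖ = 1)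
    (hq : 2 * r ≤ dist q p) : r ≤ dist (p + r • ν) q := by
  have h := dist_triangle q (p + r • ν) p
  rw [dist_self_add_left, norm_smul, hν, Real.norm_of_nonneg hr, mul_one, dist_comm q (p + r • ν)] at h
  linarith

/-- Near `p`, the set `Γ` lies in arbitrarily thin cones around the affine subspace `p + T`.
This is only one half of tangency: `T` need not be approximated by `Γ`. -/
def IsTangentSubspaceAt (Γ : Set E) (T : Submodule ℝ E) (p : E) : Prop :=
  ∀ ε > 0, ∀ᶠ q in 𝓝[Γ] p, ∃ v ∈ T, ‖q - p - v‖ ≤ ε * ‖v‖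

lemma IsTangentSubspaceAt.eventually_le_infDist {Γ : Set E} {T : Submodule ℝ E} {p : E}
    (h : IsTangentSubspaceAt Γ T p) (hΓ : Γ.Nonempty) {ε : ℝ} (hε : 0 < ε) :
    ∀ᶠ r in 𝓝[>] 0, ∀ ν : E, ‖ν‖ = 1 → ν ∈ Tᗮ → (1 - ε) * r ≤ infDist (p + r • ν) Γ := by
  obtain ⟨δ, hδ, hnear⟩ := Metric.mem_nhdsWithin_iff.1 (h ε hε)
  filter_upwards [Ioo_mem_nhdsGT (half_pos hδ)] with r ⟨hr, hrδ⟩ ν hν hνT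
  refine (le_infDist hΓ).2 fun q hq => ?_
  by_cases hqp : dist q p < δ
  · obtain ⟨v, hv, hqv⟩ := hnear ⟨hqp, hq⟩
    exact one_sub_mul_le_dist_add_smul hr.le hε.le hν hνT hv hqv
  · calc (1 - ε) * r ≤ r := by nlinarith
      _ ≤ dist (p + r • ν) q := le_dist_add_smul_of_two_mul_le_dist hr.le hν (by linarith)

end InnerProductSpace

section Delta

variable {k m : ℕ} {Γ : Set (Pk k m)} {T : Submodule ℝ (Pk k m)} {p : Pk k m} {r : ℝ}

lemma bddBelow_deltaFn_set :
    BddBelow {d : ℝ | ∃ ν : Pk k m, ‖ν‖ = 1 ∧ ν ∈ Tᗮ ∧ d = infDist (p + r • ν) Γ} :=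
  ⟨0, by rintro d ⟨ν, -, -, rfl⟩; exact infDist_nonneg⟩

lemma deltaFn_le_self (hp : p ∈ Γ) (hT : Tᗮ ≠ ⊥) (hr : 0 ≤ r) : deltaFn k m Γ T p r ≤ r := by
  obtain ⟨ν, hνT, hν⟩ := Submodule.exists_norm_eq_one_mem hT
  calc deltaFn k m Γ T p r ≤ infDist (p + r • ν) Γ :=
        csInf_le bddBelow_deltaFn_set ⟨ν, hν, hνT, rfl⟩
    _ ≤ dist (p + r • ν) p := infDist_le_dist_of_mem hp
    _ = r := by rw [dist_self_add_left, norm_smul, hν, Real.norm_of_nonneg hr, mul_one]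

lemma le_deltaFn (hT : Tᗮ ≠ ⊥) {c : ℝ}
    (h : ∀ ν : Pk k m, ‖ν‖ = 1 → ν ∈ Tᗮ → c ≤ infDist (p + r • ν) Γ) :
    c ≤ deltaFn k m Γ T p r := by
  obtain ⟨ν, hνT, hν⟩ := Submodule.exists_norm_eq_one_mem hT
  refine le_csInf ⟨_, ν, hν, hνT, rfl⟩ ?_
  rintro d ⟨ν, hν, hνT, rfl⟩
  exact h ν hν hνT

theorem IsTangentSubspaceAt.tendsto_deltaFn_div_self (h : IsTangentSubspaceAt Γ T p)
    (hp : p ∈ Γ) (hT : Tᗮ ≠ ⊥) :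
    Tendsto (fun r => deltaFn k m Γ T p r / r) (𝓝[>] 0) (𝓝 1) := by
  refine tendsto_order.2 ⟨fun a ha => ?_, fun a ha => ?_⟩
  · have hε : 0 < (1 - a) / 2 := by linarith
    filter_upwards [h.eventually_le_infDist ⟨p, hp⟩ hε, self_mem_nhdsWithin] with r hlow hr
    rw [lt_div_iff₀ hr]
    calc a * r < (1 - (1 - a) / 2) * r := by nlinarith [hr.out]
      _ ≤ deltaFn k m Γ T p r := le_deltaFn hT hlow
  · filter_upwards [self_mem_nhdsWithin] with r hr
    rw [div_lt_iff₀ hr]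
    calc deltaFn k m Γ T p r ≤ r := deltaFn_le_self hp hT hr.out.le
      _ < a * r := by nlinarith [hr.out]

end Delta

section Graph

variable {E F : Type*} [NormedAddCommGroup E] [InnerProductSpace ℝ E]
  [NormedAddCommGroup F] [InnerProductSpace ℝ F]

def graphMap (f : E →L[ℝ] F) : E →ₗ[ℝ] WithLp 2 (E × F) :=
  (WithLp.linearEquiv 2 ℝ (E × F)).symm.toLinearMap ∘ₗ LinearMap.id.prod f.toLinearMap

lemma graphMap_apply (f : E →L[ℝ] F) (y : E) : graphMap f y = WithLp.toLp 2 (y, f y) := rfl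

lemma span_range_graphMap_comp_basis {ι : Type*} (f : E →L[ℝ] F) (b : Module.Basis ι ℝ E) :
    Submodule.span ℝ (range (graphMap f ∘ b)) = LinearMap.range (graphMap f) := by
  rw [range_comp, Submodule.span_image, b.span_eq, ← LinearMap.range_eq_map]

lemma orthogonal_range_graphMap_ne_bot [FiniteDimensional ℝ E] [FiniteDimensional ℝ F]
    [Nontrivial F] (f : E →L[ℝ] F) : (LinearMap.range (graphMap f))ᗮ ≠ ⊥ := by
  rw [Ne, Submodule.orthogonal_eq_bot_iff]
  intro htop
  have hrank := LinearMap.finrank_range_le (graphMap f)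
  rw [htop, finrank_top, (WithLp.linearEquiv 2 ℝ (E × F)).finrank_eq, Module.finrank_prod] at hrank
  have := Module.finrank_pos (R := ℝ) (M := F)
  omega

lemma isTangentSubspaceAt_graph {φ : E → F} {f : E →L[ℝ] F} {x : E} (hφ : HasFDerivAt φ f x)
    (U : Set E) :
    IsTangentSubspaceAt ((fun z => WithLp.toLp 2 (z, φ z)) '' U) (LinearMap.range (graphMap f))
      (WithLp.toLp 2 (x, φ x)) := by
  intro ε hε
  obtain ⟨δ, hδ, hlo⟩ := Metric.eventually_nhds_iff.1 (hφ.isLittleO.def hε)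
  refine Metric.mem_nhdsWithin_iff.2 ⟨δ, hδ, ?_⟩
  rintro _ ⟨hq, z, -, rfl⟩
  have hzx : dist z x ≤ dist (WithLp.toLp 2 (z, φ z)) (WithLp.toLp 2 (x, φ x)) := by
    rw [dist_eq_norm, dist_eq_norm, ← WithLp.toLp_sub]
    exact WithLp.norm_fst_le E (WithLp.toLp 2 (z - x, φ z - φ x))
  have hsplit : WithLp.toLp 2 (z, φ z) - WithLp.toLp 2 (x, φ x) - graphMap f (z - x)
      = WithLp.toLp 2 ((0 : E), φ z - φ x - f (z - x)) := by
    rw [graphMap_apply, ← WithLp.toLp_sub, ← WithLp.toLp_sub]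
    congr 1
    ext <;> simp
  refine ⟨graphMap f (z - x), LinearMap.mem_range_self _ _, ?_⟩
  rw [hsplit, WithLp.norm_toLp_snd]
  calc ‖φ z - φ x - f (z - x)‖ ≤ ε * ‖z - x‖ := hlo (hzx.trans_lt hq)
    _ ≤ ε * ‖graphMap f (z - x)‖ := by gcongr; exact WithLp.norm_fst_le E (graphMap f (z - x))

end Graph

theorem statement2_general
    (k n : ℕ) (hkn : k < n)
    (U : Set (Ek k))
    (φ : Ek k → Ek (n - k))
    (x : Ek k) (hx : x ∈ U)
    (hφ : DifferentiableAt ℝ φ x)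
    (Γ : Set (Pk k (n - k))) (hΓ : Γ = (fun z => emb k (n - k) (z, φ z)) '' U)
    (p : Pk k (n - k)) (hp : p = emb k (n - k) (x, φ x))
    (T : Submodule ℝ (Pk k (n - k)))
    (hT : T = Submodule.span ℝ (Set.range fun i : Fin k =>
      emb k (n - k) (EuclideanSpace.single i 1, fderiv ℝ φ x (EuclideanSpace.single i 1)))) :
    Filter.Tendsto (fun r : ℝ => deltaFn k (n - k) Γ T p r / r)
      (nhdsWithin 0 (Set.Ioi 0)) (nhds 1) := by
  have : Nonempty (Fin (n - k)) := ⟨⟨0, by omega⟩⟩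
  have hT' : T = LinearMap.range (graphMap (fderiv ℝ φ x)) := by
    rw [hT, ← span_range_graphMap_comp_basis _ (EuclideanSpace.basisFun (Fin k) ℝ).toBasis]
    congr! 3 with i
    simp [graphMap_apply, emb]
  subst hΓ hp hT'
  exact (isTangentSubspaceAt_graph hφ.hasFDerivAt U).tendsto_deltaFn_div_self ⟨x, hx, rfl⟩
    (orthogonal_range_graphMap_ne_bot _)

/-- with `φ : U → ℝ^{n-k}` continuous on the open set `U` and differentiable at
`x ∈ U`, `Γ` the graph of `φ` over `U`, `p = (x, φ x)`, and `T` the tangent space of `Γ` at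
`p` (the span of the vectors `ē_i = (e_i, ∂φ/∂xⁱ(x))`): `δ(p, r)/r → 1` as `r → 0+`. -/
theorem statement2
    (k n : ℕ) (hk : 0 < k) (hkn : k < n)
    (U : Set (Ek k)) (hU : IsOpen U)
    (φ : Ek k → Ek (n - k)) (hφc : ContinuousOn φ U)
    (x : Ek k) (hx : x ∈ U)
    (hφ : DifferentiableAt ℝ φ x)
    (Γ : Set (Pk k (n - k))) (hΓ : Γ = (fun z => emb k (n - k) (z, φ z)) '' U)
    (p : Pk k (n - k)) (hp : p = emb k (n - k) (x, φ x))
    (T : Submodule ℝ (Pk k (n - k)))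
    (hT : T = Submodule.span ℝ (Set.range fun i : Fin k =>
      emb k (n - k) (EuclideanSpace.single i 1, fderiv ℝ φ x (EuclideanSpace.single i 1)))) :
    Filter.Tendsto (fun r : ℝ => deltaFn k (n - k) Γ T p r / r)
      (nhdsWithin 0 (Set.Ioi 0)) (nhds 1) :=
  statement2_general k n hkn U φ x hx hφ Γ hΓ p hp T hT
end
end

section
/- Fix an integer m ≥ 2, a real λ > (m−1)²/4, β = √(λ − (m−1)²/4), ψ(t) = sinh(t)^{−(m−1)/2} e^{iβt}, and for R > 0 let F_R(t) = ψ(t) sin²((2π/R)(t − R/2)) for t > 0. Then for every R₀ > 0 there exists a constant C > 0, depending only on m, λ and R₀, such that for all R > R₀: ∫_{R/2}^{R} |F_R'(t)|² sinh^{m−1}(t) dt ≤ C ∫_{R/2}^{R} |F_R(t)|² sinh^{m−1}(t) dt. -/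
open Set
open scoped Real

/-! With `ρ = -(m-1)/2` one has `|ψ|² sinh^{m-1} ≡ 1` and `ψ'/ψ = ρ coth t + iβ`, so for
`g(t) = sin²(a(t - R/2))`, `a = 2π/R`, the weighted mass of `F_R = ψ g` is `g²` and its weighted
energy is `(ρ coth t · g + g')² + β² g²`. On `[R/2, R]` we have `coth t ≤ coth (R₀/2)` and
`(g')² ≤ 4a² sin²`, so the energy is at most `(2ρ² coth²(R₀/2) + β²) sin⁴ + 8a² sin²`. Over a
half-period `∫ sin² = (4/3) ∫ sin⁴`, and `a ≤ 2π/R₀`. -/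

lemma cosh_div_sinh_le_of_le {s t : ℝ} (hs : 0 < s) (hst : s ≤ t) :
    Real.cosh t / Real.sinh t ≤ Real.cosh s / Real.sinh s := by
  have hs' : 0 < Real.sinh s := Real.sinh_pos_iff.2 hs
  have ht' : 0 < Real.sinh t := Real.sinh_pos_iff.2 (hs.trans_le hst)
  rw [div_le_div_iff₀ ht' hs']
  have h := Real.sinh_nonneg_iff.2 (sub_nonneg.2 hst)
  rw [Real.sinh_sub] at h
  linarith

lemma rpow_neg_half_sq_mul_pow {x : ℝ} (hx : 0 < x) {n : ℕ} (hn : 1 ≤ n) :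
    (x ^ (-(((n : ℝ) - 1) / 2))) ^ 2 * x ^ (n - 1) = 1 := by
  rw [← Real.rpow_natCast x (n - 1), Nat.cast_sub hn, ← Real.rpow_mul_natCast hx.le,
    ← Real.rpow_add hx]
  norm_num

lemma hasDerivAt_sinh_rpow {t : ℝ} (ht : 0 < t) (ρ : ℝ) :
    HasDerivAt (fun s => Real.sinh s ^ ρ)
      (ρ * (Real.cosh t / Real.sinh t) * Real.sinh t ^ ρ) t := by
  have hs : 0 < Real.sinh t := Real.sinh_pos_iff.2 ht
  convert (Real.hasDerivAt_sinh t).rpow_const (p := ρ) (Or.inl hs.ne') using 1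
  rw [Real.rpow_sub hs, Real.rpow_one]
  field_simp

lemma hasDerivAt_sin_sq_comp (a c t : ℝ) :
    HasDerivAt (fun s => Real.sin (a * (s - c)) ^ 2)
      (2 * Real.sin (a * (t - c)) * Real.cos (a * (t - c)) * a) t := by
  have hθ : HasDerivAt (fun s : ℝ => a * (s - c)) a t := by
    simpa using ((hasDerivAt_id t).sub_const c).const_mul a
  refine (hθ.sin.fun_pow 2).congr_deriv ?_
  norm_num
  ring

lemma norm_cexp_I_mul_ofReal_mul (β t : ℝ) : ‖Complex.exp (Complex.I * β * t)‖ = 1 := by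
  rw [mul_assoc, ← Complex.ofReal_mul, mul_comm, Complex.norm_exp_ofReal_mul_I]

lemma norm_deriv_ofReal_mul_cexp_sq {h : ℝ → ℝ} {h' t : ℝ} (hh : HasDerivAt h h' t) (β : ℝ) :
    ‖deriv (fun s : ℝ => (h s : ℂ) * Complex.exp (Complex.I * β * s)) t‖ ^ 2
      = h' ^ 2 + (β * h t) ^ 2 := by
  have hphase : HasDerivAt (fun s : ℝ => Complex.exp (Complex.I * β * s))
      (Complex.exp (Complex.I * β * t) * (Complex.I * β)) t := by
    simpa using ((Complex.ofRealCLM.hasDerivAt (x := t)).const_mul (Complex.I * β)).cexp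
  rw [(hh.ofReal_comp.fun_mul hphase).deriv]
  have : (h' : ℂ) * Complex.exp (Complex.I * β * t)
        + h t * (Complex.exp (Complex.I * β * t) * (Complex.I * β))
      = Complex.exp (Complex.I * β * t) * (h' + (β * h t : ℝ) * Complex.I) := by
    push_cast; ring
  rw [this, norm_mul, norm_cexp_I_mul_ofReal_mul, one_mul, Complex.sq_norm,
    Complex.normSq_add_mul_I]

lemma intervalIntegral.integral_mono_on_Ioc_of_nonneg {a b : ℝ} (hab : a ≤ b) {f g : ℝ → ℝ}
    (hf : ∀ x ∈ Ioc a b, 0 ≤ f x) (h : ∀ x ∈ Ioc a b, f x ≤ g x)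
    (hg : IntervalIntegrable g MeasureTheory.volume a b) :
    ∫ x in a..b, f x ≤ ∫ x in a..b, g x := by
  rw [intervalIntegral.integral_of_le hab, intervalIntegral.integral_of_le hab]
  exact MeasureTheory.setIntegral_mono_of_nonneg hf h hg.1

lemma norm_sq_mul_sinh_pow {n : ℕ} (hn : 1 ≤ n) (β x : ℝ) {t : ℝ} (ht : 0 < t) :
    ‖((Real.sinh t ^ (-(((n : ℝ) - 1) / 2)) : ℝ) : ℂ) * Complex.exp (Complex.I * β * t) * x‖ ^ 2
      * Real.sinh t ^ (n - 1) = x ^ 2 := by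
  have hs : 0 < Real.sinh t := Real.sinh_pos_iff.2 ht
  rw [norm_mul, norm_mul, norm_cexp_I_mul_ofReal_mul, Complex.norm_real, Complex.norm_real,
    Real.norm_of_nonneg (Real.rpow_nonneg hs.le _), mul_one, Real.norm_eq_abs, mul_pow, sq_abs,
    mul_right_comm, rpow_neg_half_sq_mul_pow hs hn, one_mul]

lemma norm_deriv_sq_mul_sinh_pow {n : ℕ} (hn : 1 ≤ n) (β : ℝ) {g : ℝ → ℝ} {g' t : ℝ}
    (hg : HasDerivAt g g' t) (ht : 0 < t) :
    ‖deriv (fun s : ℝ => ((Real.sinh s ^ (-(((n : ℝ) - 1) / 2)) : ℝ) : ℂ)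
        * Complex.exp (Complex.I * β * s) * (g s : ℂ)) t‖ ^ 2 * Real.sinh t ^ (n - 1)
      = (-(((n : ℝ) - 1) / 2) * (Real.cosh t / Real.sinh t) * g t + g') ^ 2
        + (β * g t) ^ 2 := by
  set ρ : ℝ := -(((n : ℝ) - 1) / 2)
  have hs : 0 < Real.sinh t := Real.sinh_pos_iff.2 ht
  have hfun : (fun s : ℝ => ((Real.sinh s ^ ρ : ℝ) : ℂ) * Complex.exp (Complex.I * β * s)
      * (g s : ℂ)) =
      fun s => ((Real.sinh s ^ ρ * g s : ℝ) : ℂ) * Complex.exp (Complex.I * β * s) := by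
    funext s; push_cast; ring
  rw [hfun, norm_deriv_ofReal_mul_cexp_sq ((hasDerivAt_sinh_rpow ht ρ).fun_mul hg) β]
  have hw := rpow_neg_half_sq_mul_pow hs hn
  linear_combination ((ρ * (Real.cosh t / Real.sinh t) * g t + g') ^ 2 + (β * g t) ^ 2) * hw

lemma integral_sin_half_wave_pow {R : ℝ} (hR : R ≠ 0) (n : ℕ) :
    ∫ t in (R / 2)..R, Real.sin (2 * π / R * (t - R / 2)) ^ n
      = R / (2 * π) * ∫ x in (0 : ℝ)..π, Real.sin x ^ n := by
  have ha : 2 * π / R ≠ 0 := div_ne_zero (by positivity) hR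
  rw [intervalIntegral.integral_comp_sub_right (fun s => Real.sin (2 * π / R * s) ^ n),
    intervalIntegral.integral_comp_mul_left (fun x => Real.sin x ^ n) ha, smul_eq_mul]
  have e : 2 * π / R * (R - R / 2) = π := by field_simp; ring
  rw [sub_self, mul_zero, e, inv_div]

lemma integral_sin_pow_four :
    ∫ x in (0 : ℝ)..π, Real.sin x ^ 4 = 3 / 4 * ∫ x in (0 : ℝ)..π, Real.sin x ^ 2 := by
  rw [integral_sin_pow 2]; norm_num

lemma integral_sin_half_wave_sq {R : ℝ} (hR : R ≠ 0) :
    ∫ t in (R / 2)..R, Real.sin (2 * π / R * (t - R / 2)) ^ 2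
      = 4 / 3 * ∫ t in (R / 2)..R, Real.sin (2 * π / R * (t - R / 2)) ^ 4 := by
  rw [integral_sin_half_wave_pow hR, integral_sin_half_wave_pow hR, integral_sin_pow_four]
  ring

lemma sq_add_sq_le_of_coth_le {ρ β a q K S C : ℝ} (hq : 0 ≤ q) (hqK : q ≤ K)
    (hSC : S ^ 2 + C ^ 2 = 1) :
    (ρ * q * S ^ 2 + 2 * S * C * a) ^ 2 + (β * S ^ 2) ^ 2
      ≤ (2 * ρ ^ 2 * K ^ 2 + β ^ 2) * S ^ 4 + 8 * a ^ 2 * S ^ 2 := by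
  have hq2 : q ^ 2 ≤ K ^ 2 := pow_le_pow_left₀ hq hqK 2
  have hC : C ^ 2 ≤ 1 := by nlinarith [sq_nonneg S]
  nlinarith [sq_nonneg (ρ * q * S ^ 2 - 2 * S * C * a), mul_le_mul_of_nonneg_left hq2
    (by positivity : (0 : ℝ) ≤ ρ ^ 2 * S ^ 4), mul_le_mul_of_nonneg_left hC
    (by positivity : (0 : ℝ) ≤ a ^ 2 * S ^ 2)]

theorem statement12_general
    (m : ℕ) (hm : 2 ≤ m)
    (β : ℝ)
    (ψ : ℝ → ℂ)
    (hψ : ∀ t : ℝ, ψ t =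
      ((Real.sinh t ^ (-(((m : ℝ) - 1) / 2)) : ℝ) : ℂ) * Complex.exp (Complex.I * β * t))
    (F : ℝ → ℝ → ℂ)
    (hF : ∀ R t : ℝ, F R t = ψ t * ((Real.sin (2 * π / R * (t - R / 2)) ^ 2 : ℝ) : ℂ)) :
    ∀ R₀ : ℝ, 0 < R₀ → ∃ C : ℝ, 0 < C ∧ ∀ R : ℝ, R₀ < R →
      (∫ t in (R / 2)..R, ‖deriv (F R) t‖ ^ 2 * Real.sinh t ^ (m - 1))
        ≤ C * ∫ t in (R / 2)..R, ‖F R t‖ ^ 2 * Real.sinh t ^ (m - 1) := by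
  intro R₀ hR₀
  set ρ : ℝ := -(((m : ℝ) - 1) / 2)
  set K := Real.cosh (R₀ / 2) / Real.sinh (R₀ / 2)
  refine ⟨2 * ρ ^ 2 * K ^ 2 + β ^ 2 + 32 / 3 * (2 * π / R₀) ^ 2, by positivity, fun R hR => ?_⟩
  have hRpos : 0 < R := hR₀.trans hR
  have hm1 : 1 ≤ m := by omega
  set a := 2 * π / R
  set S := fun t => Real.sin (a * (t - R / 2))
  have hFR : F R = fun s => ((Real.sinh s ^ ρ : ℝ) : ℂ) * Complex.exp (Complex.I * β * s)
      * ((S s ^ 2 : ℝ) : ℂ) := funext fun s => by rw [hF, hψ]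
  have hmass : ∀ t ∈ uIcc (R / 2) R, ‖F R t‖ ^ 2 * Real.sinh t ^ (m - 1) = S t ^ 4 := by
    intro t ht
    have ht0 : 0 < t := by rw [uIcc_of_le (by linarith)] at ht; linarith [ht.1]
    rw [hFR, norm_sq_mul_sinh_pow hm1 β _ ht0, ← pow_mul]
  have henergy : ∀ t ∈ Ioc (R / 2) R, ‖deriv (F R) t‖ ^ 2 * Real.sinh t ^ (m - 1)
      ≤ (2 * ρ ^ 2 * K ^ 2 + β ^ 2) * S t ^ 4 + 8 * a ^ 2 * S t ^ 2 := by
    intro t ht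
    have ht0 : 0 < t := by linarith [ht.1]
    rw [hFR, norm_deriv_sq_mul_sinh_pow hm1 β (hasDerivAt_sin_sq_comp a (R / 2) t) ht0]
    exact sq_add_sq_le_of_coth_le (div_pos (Real.cosh_pos t) (Real.sinh_pos_iff.2 ht0)).le
      (cosh_div_sinh_le_of_le (by positivity) (by linarith [ht.1]))
      (Real.sin_sq_add_cos_sq _)
  have hS : ∀ n : ℕ, IntervalIntegrable (fun t => S t ^ n) MeasureTheory.volume (R / 2) R :=
    fun n => (by fun_prop : Continuous fun t => S t ^ n).intervalIntegrable _ _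
  calc (∫ t in (R / 2)..R, ‖deriv (F R) t‖ ^ 2 * Real.sinh t ^ (m - 1))
      ≤ ∫ t in (R / 2)..R, ((2 * ρ ^ 2 * K ^ 2 + β ^ 2) * S t ^ 4 + 8 * a ^ 2 * S t ^ 2) :=
        intervalIntegral.integral_mono_on_Ioc_of_nonneg (by linarith)
          (fun t ht => mul_nonneg (sq_nonneg _)
            (pow_nonneg (Real.sinh_nonneg_iff.2 (by linarith [ht.1])) _))
          henergy (((hS 4).const_mul _).add ((hS 2).const_mul _))
    _ = (2 * ρ ^ 2 * K ^ 2 + β ^ 2 + 32 / 3 * a ^ 2) * ∫ t in (R / 2)..R, S t ^ 4 := by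
        rw [intervalIntegral.integral_add ((hS 4).const_mul _) ((hS 2).const_mul _),
          intervalIntegral.integral_const_mul, intervalIntegral.integral_const_mul,
          integral_sin_half_wave_sq hRpos.ne']
        ring
    _ ≤ (2 * ρ ^ 2 * K ^ 2 + β ^ 2 + 32 / 3 * (2 * π / R₀) ^ 2) * ∫ t in (R / 2)..R, S t ^ 4 := by
        gcongr
        · exact intervalIntegral.integral_nonneg (by linarith) fun t _ => by positivity
        · exact div_le_div_of_nonneg_left (by positivity) hR₀ hR.le
    _ = _ := by rw [intervalIntegral.integral_congr hmass]

/-- for an integer `m ≥ 2`, a real `λ > (m−1)²/4`, `β = √(λ − (m−1)²/4)`,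
`ψ(t) = sinh(t)^{−(m−1)/2} e^{iβt}` and `F_R(t) = ψ(t) sin²((2π/R)(t − R/2))`: for every
`R₀ > 0` there is `C > 0` (depending only on `m`, `λ`, `R₀`) such that for all `R > R₀`,
`∫_{R/2}^R |F_R'|² sinh^{m−1} ≤ C ∫_{R/2}^R |F_R|² sinh^{m−1}`. -/
theorem statement12
    (m : ℕ) (hm : 2 ≤ m) (lam : ℝ) (hlam : ((m : ℝ) - 1) ^ 2 / 4 < lam)
    (β : ℝ) (hβ : β = Real.sqrt (lam - ((m : ℝ) - 1) ^ 2 / 4))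
    (ψ : ℝ → ℂ)
    (hψ : ∀ t : ℝ, ψ t =
      ((Real.sinh t ^ (-(((m : ℝ) - 1) / 2)) : ℝ) : ℂ) * Complex.exp (Complex.I * β * t))
    (F : ℝ → ℝ → ℂ)
    (hF : ∀ R t : ℝ, F R t = ψ t * ((Real.sin (2 * π / R * (t - R / 2)) ^ 2 : ℝ) : ℂ)) :
    ∀ R₀ : ℝ, 0 < R₀ → ∃ C : ℝ, 0 < C ∧ ∀ R : ℝ, R₀ < R →
      (∫ t in (R / 2)..R, ‖deriv (F R) t‖ ^ 2 * Real.sinh t ^ (m - 1))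
        ≤ C * ∫ t in (R / 2)..R, ‖F R t‖ ^ 2 * Real.sinh t ^ (m - 1) :=
  statement12_general m hm β ψ hψ F hF
end

section
/- For an integer m ≥ 2 define f(t) = ∫₀ᵗ ( (∫₀^R sinh^{m−1}(s) ds) / sinh^{m−1}(R) ) dR for t > 0. Then f is convex on (0, +∞), its derivative is f'(t) = (∫₀ᵗ sinh^{m−1}(s) ds)/sinh^{m−1}(t), and f satisfies the identity f''(t) + (m−1) coth(t) f'(t) = 1 for every t > 0. -/
open Filter Set
open scoped Real

noncomputable section

/-- The hyperbolic cotangent `coth t = cosh t / sinh t`. -/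
def coth (t : ℝ) : ℝ := Real.cosh t / Real.sinh t

/-- The function `f(t) = ∫₀ᵗ ( (∫₀ᴿ sinh^{m−1}(s) ds) / sinh^{m−1}(R) ) dR`. -/
def fmodel (m : ℕ) (t : ℝ) : ℝ :=
  ∫ R in (0 : ℝ)..t, (∫ s in (0 : ℝ)..R, Real.sinh s ^ (m - 1)) / Real.sinh R ^ (m - 1)

/-!
Write `n = m - 1`, `N(t) = ∫₀ᵗ sinhⁿ s ds` and `g = N / sinhⁿ`, so that `f' = g`. Away from `0`
the quotient rule gives `g' = 1 - n coth · g`, which is the identity. Convexity amounts to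
`g' ≥ 0` on `(0, ∞)`, i.e. `n cosh t · N(t) ≤ sinhⁿ⁺¹ t`: the difference
`sinhⁿ⁺¹ / cosh - n N` vanishes at `0` and has derivative `sinhⁿ / cosh² ≥ 0`.
The only delicate point is continuity of `g` at `0`, where `|N(t)| ≤ |t| · |sinh t|ⁿ` gives
`|g(t)| ≤ |t|`.
-/

open Real

def sinhPowIntegral (n : ℕ) (t : ℝ) : ℝ := ∫ s in (0 : ℝ)..t, sinh s ^ n

def sinhPowQuotient (n : ℕ) (t : ℝ) : ℝ := sinhPowIntegral n t / sinh t ^ n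

lemma hasDerivAt_sinhPowIntegral (n : ℕ) (t : ℝ) :
    HasDerivAt (sinhPowIntegral n) (sinh t ^ n) t :=
  ((continuous_sinh.pow n).integral_hasStrictDerivAt 0 t).hasDerivAt

lemma abs_sinhPowIntegral_le (n : ℕ) (t : ℝ) :
    |sinhPowIntegral n t| ≤ |t| * |sinh t| ^ n := by
  have hbound : ∀ s ∈ uIoc (0 : ℝ) t, ‖sinh s ^ n‖ ≤ |sinh t| ^ n := by
    intro s hs
    rw [norm_pow, norm_eq_abs, abs_sinh, abs_sinh]
    gcongr
    simpa using abs_sub_left_of_mem_uIcc (uIoc_subset_uIcc hs)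
  simpa [sinhPowIntegral, mul_comm] using intervalIntegral.norm_integral_le_of_norm_le_const hbound

lemma abs_sinhPowQuotient_le (n : ℕ) (t : ℝ) : |sinhPowQuotient n t| ≤ |t| := by
  rcases eq_or_ne t 0 with rfl | ht
  · simp [sinhPowQuotient, sinhPowIntegral]
  · have hpos : 0 < |sinh t| ^ n := pow_pos (abs_pos.2 (sinh_ne_zero.2 ht)) n
    rw [sinhPowQuotient, abs_div, abs_pow, div_le_iff₀ hpos]
    exact abs_sinhPowIntegral_le n t

lemma continuous_sinhPowQuotient (n : ℕ) : Continuous (sinhPowQuotient n) := by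
  refine continuous_iff_continuousAt.2 fun t => ?_
  rcases eq_or_ne t 0 with rfl | ht
  · have h0 : sinhPowQuotient n 0 = 0 := by simp [sinhPowQuotient, sinhPowIntegral]
    rw [ContinuousAt, h0]
    exact squeeze_zero_norm (abs_sinhPowQuotient_le n)
      (by simpa using continuous_abs.tendsto (0 : ℝ))
  · exact (hasDerivAt_sinhPowIntegral n t).continuousAt.div (continuous_sinh.pow n).continuousAt
      (pow_ne_zero n (sinh_ne_zero.2 ht))

lemma hasDerivAt_sinhPowQuotient (n : ℕ) {t : ℝ} (ht : t ≠ 0) :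
    HasDerivAt (sinhPowQuotient n) (1 - n * coth t * sinhPowQuotient n t) t := by
  have hs : sinh t ≠ 0 := sinh_ne_zero.2 ht
  refine ((hasDerivAt_sinhPowIntegral n t).div ((hasDerivAt_sinh t).pow n)
    (pow_ne_zero n hs)).congr_deriv ?_
  rcases n with _ | n
  · simp
  · simp only [sinhPowQuotient, coth, Pi.pow_apply, Nat.add_sub_cancel, Nat.cast_add_one]
    field_simp
    ring

lemma hasDerivAt_sinh_pow_succ_div_cosh_sub (n : ℕ) (t : ℝ) :
    HasDerivAt (fun u => sinh u ^ (n + 1) / cosh u - n * sinhPowIntegral n u)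
      (sinh t ^ n / cosh t ^ 2) t := by
  have hc : cosh t ≠ 0 := (cosh_pos t).ne'
  refine ((((hasDerivAt_sinh t).pow (n + 1)).div (hasDerivAt_cosh t) hc).sub
    ((hasDerivAt_sinhPowIntegral n t).const_mul (n : ℝ))).congr_deriv ?_
  simp only [Pi.pow_apply, Nat.add_sub_cancel, Nat.cast_add_one]
  field_simp
  linear_combination sinh t ^ n * cosh_sq_sub_sinh_sq t

lemma mul_cosh_mul_sinhPowIntegral_le (n : ℕ) {t : ℝ} (ht : 0 ≤ t) :
    n * cosh t * sinhPowIntegral n t ≤ sinh t ^ (n + 1) := by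
  set ψ : ℝ → ℝ := fun u => sinh u ^ (n + 1) / cosh u - n * sinhPowIntegral n u
  have hψ : MonotoneOn ψ (Ici 0) := by
    refine monotoneOn_of_hasDerivWithinAt_nonneg (convex_Ici 0)
      (fun u _ => (hasDerivAt_sinh_pow_succ_div_cosh_sub n u).continuousAt.continuousWithinAt)
      (fun u _ => (hasDerivAt_sinh_pow_succ_div_cosh_sub n u).hasDerivWithinAt) ?_
    intro u hu
    rw [interior_Ici] at hu
    exact div_nonneg (pow_nonneg (sinh_nonneg_iff.2 hu.le) n) (sq_nonneg _)
  have h0 : ψ 0 = 0 := by simp [ψ, sinhPowIntegral]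
  have hψt : 0 ≤ ψ t := h0 ▸ hψ self_mem_Ici ht ht
  have hc := cosh_pos t
  simp only [ψ, sub_nonneg, le_div_iff₀ hc] at hψt
  linarith

lemma mul_coth_mul_sinhPowQuotient_le_one (n : ℕ) {t : ℝ} (ht : 0 < t) :
    n * coth t * sinhPowQuotient n t ≤ 1 := by
  have hs : 0 < sinh t := sinh_pos_iff.2 ht
  have hrw : n * coth t * sinhPowQuotient n t =
      n * cosh t * sinhPowIntegral n t / sinh t ^ (n + 1) := by
    rw [coth, sinhPowQuotient]
    field_simp
    ring
  rw [hrw, div_le_one (pow_pos hs _)]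
  exact mul_cosh_mul_sinhPowIntegral_le n ht.le

lemma hasDerivAt_fmodel (m : ℕ) (t : ℝ) : HasDerivAt (fmodel m) (sinhPowQuotient (m - 1) t) t :=
  ((continuous_sinhPowQuotient (m - 1)).integral_hasStrictDerivAt 0 t).hasDerivAt

lemma deriv_fmodel (m : ℕ) : deriv (fmodel m) = sinhPowQuotient (m - 1) :=
  funext fun t => (hasDerivAt_fmodel m t).deriv

lemma convexOn_fmodel (m : ℕ) : ConvexOn ℝ (Ioi 0) (fmodel m) := by
  refine convexOn_of_hasDerivWithinAt2_nonneg
    (f'' := fun t => 1 - ((m - 1 : ℕ) : ℝ) * coth t * sinhPowQuotient (m - 1) t) (convex_Ioi 0)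
    (fun t _ => (hasDerivAt_fmodel m t).continuousAt.continuousWithinAt)
    (fun t _ => (hasDerivAt_fmodel m t).hasDerivWithinAt) (fun t ht => ?_) (fun t ht => ?_) <;>
    rw [interior_Ioi] at ht
  · exact (hasDerivAt_sinhPowQuotient (m - 1) ht.ne').hasDerivWithinAt
  · exact sub_nonneg.2 (mul_coth_mul_sinhPowQuotient_le_one (m - 1) ht)

lemma deriv_deriv_fmodel_add_mul_coth_mul_deriv (m : ℕ) {t : ℝ} (ht : t ≠ 0) :
    deriv (deriv (fmodel m)) t + ((m - 1 : ℕ) : ℝ) * coth t * deriv (fmodel m) t = 1 := by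
  rw [deriv_fmodel, (hasDerivAt_sinhPowQuotient (m - 1) ht).deriv]
  ring

/-- for an integer `m ≥ 2`, the function
`f(t) = ∫₀ᵗ ((∫₀ᴿ sinh^{m−1}(s) ds)/sinh^{m−1}(R)) dR` is convex on `(0, +∞)`, its
derivative is `f'(t) = (∫₀ᵗ sinh^{m−1}(s) ds)/sinh^{m−1}(t)`, and it satisfies
`f''(t) + (m−1) coth(t) f'(t) = 1` for every `t > 0`. -/
theorem statement14 (m : ℕ) (hm : 2 ≤ m) :
    ConvexOn ℝ (Set.Ioi 0) (fmodel m) ∧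
    (∀ t : ℝ, 0 < t →
      deriv (fmodel m) t = (∫ s in (0 : ℝ)..t, Real.sinh s ^ (m - 1)) / Real.sinh t ^ (m - 1)) ∧
    (∀ t : ℝ, 0 < t →
      deriv (deriv (fmodel m)) t + ((m : ℝ) - 1) * coth t * deriv (fmodel m) t = 1) := by
  refine ⟨convexOn_fmodel m, fun t _ => congrFun (deriv_fmodel m) t, fun t ht => ?_⟩
  rw [← Nat.cast_pred (by omega : 0 < m)]
  exact deriv_deriv_fmodel_add_mul_coth_mul_deriv m ht.ne'
end
end

section
/- Fix an integer m ≥ 2, a real λ > (m−1)²/4, β = √(λ − (m−1)²/4), ψ(t) = sinh(t)^{−(m−1)/2} e^{iβt}, and for R > 0 let F_R(t) = ψ(t) sin²((2π/R)(t − R/2)) for t > 0. Then for every R > 0 and every η > 0 there exists a C^∞ function υ : ℝ → ℂ with compact support contained in (0, +∞) such that: (i) ∫₀^{∞} |υ''(t) + (m−1) coth(t) υ'(t) + λ υ(t)|² sinh^{m−1}(t) dt ≤ 2 ∫_{R/2}^{R} |F_R''(t) + (m−1) coth(t) F_R'(t) + λ F_R(t)|² sinh^{m−1}(t) dt + η;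 (ii) ∫_{R/2}^{R} |F_R(t)|² sinh^{m−1}(t) dt ≤ 2 ∫₀^{∞} |υ(t)|² sinh^{m−1}(t) dt; (iii) ∫₀^{∞} |υ'(t)|² sinh^{m−1}(t) dt ≤ 2 ∫_{R/2}^{R} |F_R'(t)|² sinh^{m−1}(t) dt + η; and (iv) ∫₀^{∞} |υ''(t)|² sinh^{m−1}(t) dt ≤ 2 ∫_{R/2}^{R} |F_R''(t)|² sinh^{m−1}(t) dt + η. -/
/-!
`F_R` is smooth on `(0, ∞)` and, because of the factor `sin²`, vanishes together with its first
derivative at `R/2` and at `R`. Multiply it by a smooth plateau function equal to `1` on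
`[R/2 - ε, R + ε]`, supported in `[R/2 - 2ε, R + 2ε]`, whose `k`-th derivative is `O(ε⁻ᵏ)`.
Nothing changes on `[R/2, R]`. On the two margins of width `2ε`, Taylor's bounds
`|F_R| = O(ε²)` and `|F_R'| = O(ε)` compensate the derivatives of the cutoff, so the truncation
and its first two derivatives stay bounded uniformly in `ε`, and the margins contribute `O(ε)` to
each of the integrals. The factors `2` in the statement are slack.
-/

open Filter Set
open scoped Real

noncomputable section

open MeasureTheory Real Topology
open scoped ContDiff

namespace Real.smoothTransition

theorem iteratedDeriv_eq_zero {k : ℕ} (hk : k ≠ 0) {x : ℝ} (hx : x ∉ Icc 0 1) :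
    iteratedDeriv k smoothTransition x = 0 := by
  obtain ⟨c, hc⟩ : ∃ c : ℝ, smoothTransition =ᶠ[𝓝 x] fun _ ↦ c := by
    rcases lt_or_ge x 0 with h | h
    · exact ⟨0, eventually_of_mem (Iio_mem_nhds h) fun y hy ↦ zero_of_nonpos hy.le⟩
    · have h1 : 1 < x := by by_contra! h1; exact hx ⟨h, h1⟩
      exact ⟨1, eventually_of_mem (Ioi_mem_nhds h1) fun y hy ↦ one_of_one_le hy.le⟩
  rw [hc.iteratedDeriv_eq, iteratedDeriv_const, if_neg hk]

theorem exists_bound_iteratedDeriv (k : ℕ) :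
    ∃ C, ∀ x, |iteratedDeriv k smoothTransition x| ≤ C := by
  rcases eq_or_ne k 0 with rfl | hk
  · exact ⟨1, fun x ↦ by rw [iteratedDeriv_zero, abs_of_nonneg (nonneg x)]; exact le_one x⟩
  · exact ((smoothTransition.contDiff (n := k)).continuous_iteratedDeriv' k)
      |>.bounded_above_of_compact_support
        (HasCompactSupport.intro isCompact_Icc fun x hx ↦ iteratedDeriv_eq_zero hk hx)

end Real.smoothTransition

theorem iteratedDeriv_comp_mul_sub {f : ℝ → ℝ} {k : ℕ} (hf : ContDiff ℝ k f) (s c t : ℝ) :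
    iteratedDeriv k (fun x ↦ f (s * (x - c))) t = s ^ k * iteratedDeriv k f (s * (t - c)) := by
  rw [iteratedDeriv_comp_sub_const (f := fun y ↦ f (s * y))]
  exact congrFun (iteratedDeriv_comp_const_mul hf s) (t - c)

def plateau (l r ε : ℝ) (t : ℝ) : ℝ :=
  smoothTransition (ε⁻¹ * (t - l)) * smoothTransition (-ε⁻¹ * (t - r))

namespace plateau

variable {l r ε t : ℝ}

theorem contDiff {n : ℕ∞} : ContDiff ℝ n (plateau l r ε) := by
  unfold plateau; fun_prop

theorem nonneg : 0 ≤ plateau l r ε t :=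
  mul_nonneg (smoothTransition.nonneg _) (smoothTransition.nonneg _)

theorem le_one : plateau l r ε t ≤ 1 :=
  mul_le_one₀ (smoothTransition.le_one _) (smoothTransition.nonneg _) (smoothTransition.le_one _)

theorem eq_zero (hε : 0 ≤ ε) (ht : t ∉ Ioo l r) : plateau l r ε t = 0 := by
  rw [mem_Ioo, not_and_or, not_lt, not_lt] at ht
  rcases ht with ht | ht
  · rw [plateau, smoothTransition.zero_of_nonpos
      (mul_nonpos_of_nonneg_of_nonpos (inv_nonneg.2 hε) (by linarith)), zero_mul]
  · rw [plateau, smoothTransition.zero_of_nonpos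
      (mul_nonpos_of_nonpos_of_nonneg (neg_nonpos.2 (inv_nonneg.2 hε)) (by linarith)), mul_zero]

theorem eq_one (hε : 0 < ε) (ht : t ∈ Icc (l + ε) (r - ε)) : plateau l r ε t = 1 := by
  have h1 : 1 ≤ ε⁻¹ * (t - l) := by rw [inv_mul_eq_div, le_div_iff₀ hε]; linarith [ht.1]
  have h2 : 1 ≤ -ε⁻¹ * (t - r) := by
    rw [neg_mul, ← mul_neg, inv_mul_eq_div, le_div_iff₀ hε]; linarith [ht.2]
  rw [plateau, smoothTransition.one_of_one_le h1, smoothTransition.one_of_one_le h2, mul_one]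

theorem exists_abs_iteratedDeriv_le (k : ℕ) :
    ∃ K, ∀ l r ε t : ℝ, 0 < ε → |iteratedDeriv k (plateau l r ε) t| ≤ K / ε ^ k := by
  choose C hC using smoothTransition.exists_bound_iteratedDeriv
  refine ⟨∑ i ∈ Finset.range (k + 1), k.choose i * (C i * C (k - i)), fun l r ε t hε ↦ ?_⟩
  have hT : ∀ n : ℕ, ContDiff ℝ n smoothTransition := fun n ↦ smoothTransition.contDiff
  unfold plateau
  rw [iteratedDeriv_fun_mul (by fun_prop) (by fun_prop), Finset.sum_div]
  refine (Finset.abs_sum_le_sum_abs _ _).trans (Finset.sum_le_sum fun i hi ↦ ?_)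
  have hi : i ≤ k := Nat.lt_succ_iff.1 (Finset.mem_range.1 hi)
  rw [iteratedDeriv_comp_mul_sub (hT i), iteratedDeriv_comp_mul_sub (hT (k - i)), abs_mul,
    abs_mul, abs_mul, abs_mul, abs_pow, abs_pow, abs_neg, abs_inv, abs_of_pos hε, Nat.abs_cast]
  calc (k.choose i : ℝ) * (ε⁻¹ ^ i * |iteratedDeriv i smoothTransition _|) *
        (ε⁻¹ ^ (k - i) * |iteratedDeriv (k - i) smoothTransition _|)
      ≤ k.choose i * (ε⁻¹ ^ i * C i) * (ε⁻¹ ^ (k - i) * C (k - i)) := by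
        gcongr
        · have := (abs_nonneg _).trans (hC i 0); positivity
        all_goals exact hC _ _
    _ = k.choose i * (C i * C (k - i)) / ε ^ k := by
        rw [div_eq_mul_inv, ← inv_pow, ← pow_sub_mul_pow ε⁻¹ hi]; ring

end plateau

theorem exists_Icc_sub_add_subset {U : Set ℝ} (hU : IsOpen U) {a b : ℝ} (hab : a ≤ b)
    (habU : Icc a b ⊆ U) : ∃ δ > 0, Icc (a - δ) (b + δ) ⊆ U := by
  obtain ⟨δa, hδa, ha⟩ := Metric.isOpen_iff.1 hU a (habU ⟨le_rfl, hab⟩)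
  obtain ⟨δb, hδb, hb⟩ := Metric.isOpen_iff.1 hU b (habU ⟨hab, le_rfl⟩)
  refine ⟨min δa δb / 2, by positivity, fun x hx ↦ ?_⟩
  have hδ : min δa δb / 2 < δa ∧ min δa δb / 2 < δb :=
    ⟨by linarith [min_le_left δa δb, lt_min hδa hδb],
      by linarith [min_le_right δa δb, lt_min hδa hδb]⟩
  rcases lt_or_ge x a with hxa | hxa
  · exact ha (by rw [Metric.mem_ball, Real.dist_eq, abs_lt]; constructor <;> linarith [hx.1])
  rcases le_or_gt x b with hxb | hxb
  · exact habU ⟨hxa, hxb⟩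
  · exact hb (by rw [Metric.mem_ball, Real.dist_eq, abs_lt]; constructor <;> linarith [hx.2])

theorem setIntegral_eq_intervalIntegral_of_eq_zero {f : ℝ → ℝ} {s : Set ℝ} {l r : ℝ}
    (hlr : l ≤ r) (hs : Icc l r ⊆ s) (hf : ∀ t ∉ Icc l r, f t = 0) :
    ∫ t in s, f t = ∫ t in l..r, f t := by
  rw [setIntegral_eq_integral_of_forall_compl_eq_zero fun t ht ↦ hf t fun h ↦ ht (hs h),
    intervalIntegral.integral_of_le hlr, ← integral_Icc_eq_integral_Ioc,
    setIntegral_eq_integral_of_forall_compl_eq_zero hf]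

theorem intervalIntegral_le_add_of_le_on_margins {f : ℝ → ℝ} {l a b r Q : ℝ} (hla : l ≤ a)
    (hab : a ≤ b) (hbr : b ≤ r) (hf : ContinuousOn f (Icc l r)) (hQa : ∀ t ∈ Icc l a, f t ≤ Q)
    (hQb : ∀ t ∈ Icc b r, f t ≤ Q) :
    ∫ t in l..r, f t ≤ (∫ t in a..b, f t) + Q * (a - l + (r - b)) := by
  have hint : ∀ {c d}, Icc c d ⊆ Icc l r → c ≤ d → IntervalIntegrable f volume c d :=
    fun hcd hcd' ↦ (hf.mono hcd).intervalIntegrable_of_Icc hcd'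
  have hla' := hint (Icc_subset_Icc le_rfl (hab.trans hbr)) hla
  have hab' := hint (Icc_subset_Icc hla hbr) hab
  have hbr' := hint (Icc_subset_Icc (hla.trans hab) le_rfl) hbr
  rw [← intervalIntegral.integral_add_adjacent_intervals (hla'.trans hab') hbr',
    ← intervalIntegral.integral_add_adjacent_intervals hla' hab']
  have hl : ∫ t in l..a, f t ≤ Q * (a - l) := by
    have := intervalIntegral.integral_mono_on hla hla' intervalIntegrable_const hQa
    rwa [intervalIntegral.integral_const, smul_eq_mul, mul_comm] at this
  have hr : ∫ t in b..r, f t ≤ Q * (r - b) := by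
    have := intervalIntegral.integral_mono_on hbr hbr' intervalIntegrable_const hQb
    rwa [intervalIntegral.integral_const, smul_eq_mul, mul_comm] at this
  linarith [mul_add Q (a - l) (r - b)]

variable {E : Type*} [NormedAddCommGroup E] [NormedSpace ℝ E]

def twoJet (f : ℝ → E) (t : ℝ) : E × E × E := (f t, deriv f t, deriv (deriv f) t)

theorem continuous_twoJet {f : ℝ → E} (hf : ContDiff ℝ 2 f) : Continuous (twoJet f) := by
  have h1 : ContDiff ℝ 1 (deriv f) := hf.iterate_deriv' 1 1
  exact hf.continuous.prodMk (h1.continuous.prodMk (h1.continuous_deriv le_rfl))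

theorem twoJet_eq_zero_of_notMem_tsupport {f : ℝ → E} {t : ℝ} (ht : t ∉ tsupport f) :
    twoJet f t = 0 := by
  have h1 : t ∉ tsupport (deriv f) := fun h ↦ ht (tsupport_deriv_subset h)
  simp only [twoJet, image_eq_zero_of_notMem_tsupport ht, image_eq_zero_of_notMem_tsupport h1,
    Function.notMem_support.1 fun h ↦ h1 (support_deriv_subset h), Prod.mk_zero_zero]

theorem deriv_deriv_smul {χ : ℝ → ℝ} {g : ℝ → E} {t : ℝ} (hχ : ContDiffAt ℝ 2 χ t)
    (hg : ContDiffAt ℝ 2 g t) :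
    deriv (deriv fun x ↦ χ x • g x) t =
      deriv (deriv χ) t • g t + 2 • deriv χ t • deriv g t + χ t • deriv (deriv g) t := by
  have := iteratedDerivWithin_smul (n := 2) (mem_univ t) uniqueDiffOn_univ hχ.contDiffWithinAt
    hg.contDiffWithinAt
  simp only [iteratedDerivWithin_univ, Finset.sum_range_succ, Finset.sum_range_zero,
    iteratedDeriv_succ, iteratedDeriv_zero, Nat.choose_zero_right, tsub_zero, one_smul, zero_add,
    Nat.choose_succ_self_right, Nat.reduceAdd, Nat.add_one_sub_one, Nat.choose_self,
    tsub_self] at this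
  rw [show (fun x ↦ χ x • g x) = χ • g from rfl, this]
  abel

theorem norm_deriv_le_and_norm_le_of_eq_zero {g : ℝ → E} {p t M : ℝ}
    (hg : ∀ x ∈ uIcc p t, DifferentiableAt ℝ g x)
    (hg' : ∀ x ∈ uIcc p t, DifferentiableAt ℝ (deriv g) x)
    (hM : ∀ x ∈ uIcc p t, ‖deriv (deriv g) x‖ ≤ M) (hp : g p = 0) (hp' : deriv g p = 0) :
    ‖deriv g t‖ ≤ M * |t - p| ∧ ‖g t‖ ≤ M * |t - p| ^ 2 := by
  have hderiv : ∀ x ∈ uIcc p t, ‖deriv g x‖ ≤ M * |x - p| := fun x hx ↦ by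
    have := (convex_uIcc p t).norm_image_sub_le_of_norm_deriv_le hg' hM left_mem_uIcc hx
    rwa [hp', sub_zero, Real.norm_eq_abs] at this
  refine ⟨hderiv t right_mem_uIcc, ?_⟩
  have hbound : ∀ x ∈ uIcc p t, ‖deriv g x‖ ≤ M * |t - p| := fun x hx ↦
    (hderiv x hx).trans (mul_le_mul_of_nonneg_left (abs_sub_left_of_mem_uIcc hx)
      ((norm_nonneg _).trans (hM p left_mem_uIcc)))
  have := (convex_uIcc p t).norm_image_sub_le_of_norm_deriv_le hg hbound left_mem_uIcc
    right_mem_uIcc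
  rwa [hp, sub_zero, Real.norm_eq_abs, mul_assoc, ← sq] at this

theorem norm_twoJet_smul_le {χ : ℝ → ℝ} {g : ℝ → E} {t ε K M : ℝ} (hχ : ContDiffAt ℝ 2 χ t)
    (hg : ContDiffAt ℝ 2 g t) (hε : 0 < ε) (hε1 : ε ≤ 1)
    (hχ0 : |χ t| ≤ 1) (hχ1 : |deriv χ t| ≤ K / ε) (hχ2 : |deriv (deriv χ) t| ≤ K / ε ^ 2)
    (hg0 : ‖g t‖ ≤ M * ε ^ 2) (hg1 : ‖deriv g t‖ ≤ M * ε) (hg2 : ‖deriv (deriv g) t‖ ≤ M) :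
    ‖twoJet (fun x ↦ χ x • g x) t‖ ≤ 3 * (K + 1) * M := by
  have hsmul : ∀ {c : ℝ} {v : E} {A B : ℝ}, |c| ≤ A → ‖v‖ ≤ B → ‖c • v‖ ≤ A * B :=
    fun hc hv ↦ by
      rw [norm_smul, Real.norm_eq_abs]
      exact mul_le_mul hc hv (norm_nonneg _) ((abs_nonneg _).trans hc)
  have hε2 : ε ^ 2 ≤ 1 := pow_le_one₀ hε.le hε1
  have hK : 0 ≤ K := by
    have := (abs_nonneg _).trans hχ1; rwa [le_div_iff₀ hε, zero_mul] at this
  have hM : 0 ≤ M := (norm_nonneg _).trans hg2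
  have hd : deriv (fun x ↦ χ x • g x) t = deriv χ t • g t + χ t • deriv g t := by
    rw [deriv_fun_smul (hχ.differentiableAt two_ne_zero) (hg.differentiableAt two_ne_zero),
      add_comm]
  refine norm_prod_le_iff.2 ⟨?_, norm_prod_le_iff.2 ⟨?_, ?_⟩⟩
  · calc ‖χ t • g t‖ ≤ 1 * (M * ε ^ 2) := hsmul hχ0 hg0
      _ ≤ 3 * (K + 1) * M := by nlinarith
  · calc ‖deriv (fun x ↦ χ x • g x) t‖
        ≤ K / ε * (M * ε ^ 2) + 1 * (M * ε) := by
          rw [hd]; exact (norm_add_le _ _).trans (add_le_add (hsmul hχ1 hg0) (hsmul hχ0 hg1))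
      _ = (K + 1) * M * ε := by field_simp
      _ ≤ 3 * (K + 1) * M := by
          nlinarith [mul_le_mul_of_nonneg_left hε1 (by positivity : 0 ≤ (K + 1) * M)]
  · calc ‖deriv (deriv fun x ↦ χ x • g x) t‖
        ≤ K / ε ^ 2 * (M * ε ^ 2) + 2 * (K / ε * (M * ε)) + 1 * M := by
          rw [deriv_deriv_smul hχ hg]
          refine (norm_add_le _ _).trans (add_le_add ((norm_add_le _ _).trans
            (add_le_add (hsmul hχ2 hg0) ?_)) (hsmul hχ0 hg2))
          exact norm_nsmul_le.trans (by push_cast; gcongr; exact hsmul hχ1 hg1)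
      _ = (3 * K + 1) * M := by field_simp; ring
      _ ≤ 3 * (K + 1) * M := by nlinarith

def truncate (g : ℝ → E) (a b ε : ℝ) (t : ℝ) : E := plateau (a - 2 * ε) (b + 2 * ε) ε t • g t

section truncate

variable {g : ℝ → E} {U : Set ℝ} {a b ε t : ℝ}

theorem truncate_eq_zero (hε : 0 ≤ ε) (ht : t ∉ Ioo (a - 2 * ε) (b + 2 * ε)) :
    truncate g a b ε t = 0 := by
  rw [truncate, plateau.eq_zero hε ht, zero_smul]

theorem tsupport_truncate_subset (hε : 0 ≤ ε) :
    tsupport (truncate g a b ε) ⊆ Icc (a - 2 * ε) (b + 2 * ε) :=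
  closure_minimal (fun _ ht ↦ Ioo_subset_Icc_self (not_not.1 (mt (truncate_eq_zero hε) ht)))
    isClosed_Icc

theorem truncate_eventuallyEq (hε : 0 < ε) (ht : t ∈ Icc a b) :
    truncate g a b ε =ᶠ[𝓝 t] g := by
  filter_upwards [Ioo_mem_nhds (show a - ε < t by linarith [ht.1])
    (show t < b + ε by linarith [ht.2])] with x hx
  rw [truncate, plateau.eq_one hε ⟨by linarith [hx.1], by linarith [hx.2]⟩, one_smul]

theorem twoJet_truncate (hε : 0 < ε) (ht : t ∈ Icc a b) :
    twoJet (truncate g a b ε) t = twoJet g t := by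
  have h := truncate_eventuallyEq (g := g) hε ht
  simp only [twoJet, h.eq_of_nhds, h.deriv_eq, h.deriv.deriv_eq]

theorem contDiff_truncate (hU : IsOpen U) (hg : ContDiffOn ℝ ∞ g U) (hε : 0 ≤ ε)
    (hsub : Icc (a - 2 * ε) (b + 2 * ε) ⊆ U) : ContDiff ℝ ∞ (truncate g a b ε) := by
  refine contDiff_iff_contDiffAt.2 fun x ↦ ?_
  by_cases hx : x ∈ tsupport (truncate g a b ε)
  · exact plateau.contDiff.contDiffAt.smul
      (hg.contDiffAt (hU.mem_nhds (hsub (tsupport_truncate_subset hε hx))))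
  · exact contDiffAt_const.congr_of_eventuallyEq (notMem_tsupport_iff_eventuallyEq.1 hx)

theorem exists_norm_twoJet_truncate_le (hab : a ≤ b) (hU : IsOpen U) (hg : ContDiffOn ℝ ∞ g U)
    {δ : ℝ} (hδ : Icc (a - δ) (b + δ) ⊆ U) (ha : g a = 0) (ha' : deriv g a = 0) (hb : g b = 0)
    (hb' : deriv g b = 0) :
    ∃ C, ∀ ε ∈ Ioc 0 (min 1 (δ / 2)), ∀ t ∈ Icc (a - 2 * ε) a ∪ Icc b (b + 2 * ε),
      ‖twoJet (truncate g a b ε) t‖ ≤ C := by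
  have hg' : ContDiffOn ℝ ∞ (deriv g) U := hg.deriv_of_isOpen hU le_rfl
  have hg'' : ContDiffOn ℝ ∞ (deriv (deriv g)) U := hg'.deriv_of_isOpen hU le_rfl
  have hgt : ∀ x ∈ Icc (a - δ) (b + δ), ContDiffAt ℝ ∞ g x :=
    fun x hx ↦ hg.contDiffAt (hU.mem_nhds (hδ hx))
  have hgt' : ∀ x ∈ Icc (a - δ) (b + δ), DifferentiableAt ℝ (deriv g) x :=
    fun x hx ↦ (hg'.contDiffAt (hU.mem_nhds (hδ hx))).differentiableAt (by simp)
  obtain ⟨M, hM⟩ := isCompact_Icc.exists_bound_of_continuousOn (hg''.continuousOn.mono hδ)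
  obtain ⟨K₁, hK₁⟩ := plateau.exists_abs_iteratedDeriv_le 1
  obtain ⟨K₂, hK₂⟩ := plateau.exists_abs_iteratedDeriv_le 2
  set M' := max M 0
  set K := max (max K₁ K₂) 0
  refine ⟨3 * (K + 1) * (4 * M'), fun ε ⟨hε, hεδ⟩ t ht ↦ ?_⟩
  have hε1 : ε ≤ 1 := hεδ.trans (min_le_left _ _)
  have hε2 : 2 * ε ≤ δ := by linarith [min_le_right 1 (δ / 2)]
  have near : ∀ p, g p = 0 → deriv g p = 0 → |t - p| ≤ 2 * ε → uIcc p t ⊆ Icc (a - δ) (b + δ) →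
      ‖twoJet (truncate g a b ε) t‖ ≤ 3 * (K + 1) * (4 * M') := fun p hp hp' htp hsub ↦ by
    obtain ⟨hdg, hg⟩ := norm_deriv_le_and_norm_le_of_eq_zero
      (fun x hx ↦ ((hgt x (hsub hx)).differentiableAt (by simp))) (fun x hx ↦ hgt' x (hsub hx))
      (fun x hx ↦ (hM x (hsub hx)).trans (le_max_left M 0)) hp hp'
    have htδ : t ∈ Icc (a - δ) (b + δ) := hsub right_mem_uIcc
    refine norm_twoJet_smul_le plateau.contDiff.contDiffAt ((hgt t htδ).of_le ENat.LEInfty.out)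
      hε hε1 ?_ ?_ ?_ ?_ ?_ ?_
    · rw [abs_of_nonneg plateau.nonneg]; exact plateau.le_one
    · have := hK₁ (a - 2 * ε) (b + 2 * ε) ε t hε
      rw [iteratedDeriv_one, pow_one] at this
      exact this.trans (by gcongr; exact (le_max_left _ _).trans (le_max_left _ _))
    · have := hK₂ (a - 2 * ε) (b + 2 * ε) ε t hε
      rw [iteratedDeriv_succ, iteratedDeriv_one] at this
      exact this.trans (by gcongr; exact (le_max_right _ _).trans (le_max_left _ _))
    · calc ‖g t‖ ≤ M' * |t - p| ^ 2 := hg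
        _ ≤ M' * (2 * ε) ^ 2 := by gcongr
        _ = 4 * M' * ε ^ 2 := by ring
    · calc ‖deriv g t‖ ≤ M' * |t - p| := hdg
        _ ≤ M' * (2 * ε) := by gcongr
        _ ≤ 4 * M' * ε := by nlinarith [le_max_right M 0]
    · exact (hM t htδ).trans ((le_max_left M 0).trans (by linarith [le_max_right M 0]))
  rcases ht with ht | ht
  · exact near a ha ha' (by rw [abs_le]; constructor <;> linarith [ht.1, ht.2])
      (uIcc_subset_Icc ⟨by linarith, by linarith⟩ ⟨by linarith [ht.1], by linarith [ht.2]⟩)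
  · exact near b hb hb' (by rw [abs_le]; constructor <;> linarith [ht.1, ht.2])
      (uIcc_subset_Icc ⟨by linarith, by linarith⟩ ⟨by linarith [ht.1], by linarith [ht.2]⟩)

theorem eventually_contDiff_truncate (hab : a ≤ b) (hU : IsOpen U) (habU : Icc a b ⊆ U)
    (hg : ContDiffOn ℝ ∞ g U) :
    ∀ᶠ ε in 𝓝[>] 0, ContDiff ℝ ∞ (truncate g a b ε) ∧ HasCompactSupport (truncate g a b ε) ∧
      tsupport (truncate g a b ε) ⊆ U := by
  obtain ⟨δ, hδ, hδU⟩ := exists_Icc_sub_add_subset hU hab habU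
  filter_upwards [Ioo_mem_nhdsGT (half_pos hδ)] with ε hε
  have hsub : Icc (a - 2 * ε) (b + 2 * ε) ⊆ U :=
    (Icc_subset_Icc (by linarith [hε.2]) (by linarith [hε.2])).trans hδU
  exact ⟨contDiff_truncate hU hg hε.1.le hsub,
    isCompact_Icc.of_isClosed_subset (isClosed_tsupport _) (tsupport_truncate_subset hε.1.le),
    (tsupport_truncate_subset hε.1.le).trans hsub⟩

theorem eventually_integral_twoJet_truncate_approx [ProperSpace E] (hab : a ≤ b) (hU : IsOpen U)
    (habU : Icc a b ⊆ U) (hg : ContDiffOn ℝ ∞ g U) (ha : g a = 0) (ha' : deriv g a = 0)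
    (hb : g b = 0) (hb' : deriv g b = 0) {G : ℝ → E × E × E → ℝ}
    (hG : ContinuousOn (Function.uncurry G) (U ×ˢ univ)) (hG0 : ∀ t, G t 0 = 0)
    (hG_nonneg : ∀ t ∈ U, ∀ v, 0 ≤ G t v) {η : ℝ} (hη : 0 < η) :
    ∀ᶠ ε in 𝓝[>] 0,
      ∫ t in a..b, G t (twoJet g t) ≤ ∫ t in U, G t (twoJet (truncate g a b ε) t) ∧
      ∫ t in U, G t (twoJet (truncate g a b ε) t) ≤ (∫ t in a..b, G t (twoJet g t)) + η := by
  obtain ⟨δ, hδ, hδU⟩ := exists_Icc_sub_add_subset hU hab habU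
  obtain ⟨C, hC⟩ := exists_norm_twoJet_truncate_le hab hU hg hδU ha ha' hb hb'
  obtain ⟨Q, hQ⟩ := (isCompact_Icc.prod (isCompact_closedBall (0 : E × E × E) C))
    |>.exists_bound_of_continuousOn (hG.mono (prod_mono hδU (subset_univ _)))
  have hsmall : Tendsto (fun ε : ℝ ↦ 4 * ε * Q) (𝓝[>] 0) (𝓝 0) := tendsto_nhdsWithin_of_tendsto_nhds
    (by simpa using (continuous_id.const_mul 4).mul_const Q |>.tendsto 0)
  filter_upwards [Ioc_mem_nhdsGT (show (0 : ℝ) < min 1 (δ / 2) by positivity),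
    hsmall.eventually (gt_mem_nhds hη)] with ε hε hεη
  have hε0 : 0 < ε := hε.1
  have hε2 : 2 * ε ≤ δ := by linarith [hε.2.trans (min_le_right _ _)]
  have hlr : Icc (a - 2 * ε) (b + 2 * ε) ⊆ Icc (a - δ) (b + δ) :=
    Icc_subset_Icc (by linarith) (by linarith)
  have hυ := contDiff_truncate hU hg hε0.le (hlr.trans hδU)
  set f : ℝ → ℝ := fun t ↦ G t (twoJet (truncate g a b ε) t)
  have hf : ContinuousOn f (Icc (a - 2 * ε) (b + 2 * ε)) :=
    hG.comp (continuousOn_id.prodMk (continuous_twoJet (hυ.of_le ENat.LEInfty.out)).continuousOn)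
      fun t ht ↦ ⟨hδU (hlr ht), mem_univ _⟩
  have hf0 : ∀ t ∉ Icc (a - 2 * ε) (b + 2 * ε), f t = 0 := fun t ht ↦ by
    simp only [f, twoJet_eq_zero_of_notMem_tsupport fun h ↦ ht (tsupport_truncate_subset hε0.le h),
      hG0]
  have hfQ : ∀ t ∈ Icc (a - 2 * ε) a ∪ Icc b (b + 2 * ε), f t ≤ Q := fun t ht ↦ by
    have ht' : t ∈ Icc (a - 2 * ε) (b + 2 * ε) := by
      rcases ht with ht | ht
      · exact ⟨ht.1, by linarith [ht.2]⟩
      · exact ⟨by linarith [ht.1], ht.2⟩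
    exact (le_abs_self _).trans (hQ (t, _) ⟨hlr ht', mem_closedBall_zero_iff.2 (hC ε hε t ht)⟩)
  have hmid : ∫ t in a..b, f t = ∫ t in a..b, G t (twoJet g t) :=
    intervalIntegral.integral_congr fun t ht ↦ by
      simp only [f, twoJet_truncate hε0 (by rwa [uIcc_of_le hab] at ht : t ∈ Icc a b)]
  rw [← hmid, setIntegral_eq_intervalIntegral_of_eq_zero (by linarith) (hlr.trans hδU) hf0]
  constructor
  · refine intervalIntegral.integral_mono_interval (by linarith) hab (by linarith) ?_
      (hf.intervalIntegrable_of_Icc (by linarith))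
    exact (ae_restrict_iff' measurableSet_Ioc).2 <| Eventually.of_forall fun t ht ↦
      hG_nonneg t (hδU (hlr (Ioc_subset_Icc_self ht))) _
  · calc ∫ t in (a - 2 * ε)..(b + 2 * ε), f t
        ≤ (∫ t in a..b, f t) + Q * (a - (a - 2 * ε) + (b + 2 * ε - b)) :=
          intervalIntegral_le_add_of_le_on_margins (by linarith) hab (by linarith) hf
            (fun t ht ↦ hfQ t (Or.inl ht)) (fun t ht ↦ hfQ t (Or.inr ht))
      _ ≤ (∫ t in a..b, f t) + η := by linarith

theorem eventually_weighted_norm_sq_truncate_approx [ProperSpace E] {F : Type*}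
    [NormedAddCommGroup F] (hab : a ≤ b) (hU : IsOpen U) (habU : Icc a b ⊆ U)
    (hg : ContDiffOn ℝ ∞ g U) (ha : g a = 0) (ha' : deriv g a = 0) (hb : g b = 0)
    (hb' : deriv g b = 0) {w : ℝ → ℝ} (hw : ContinuousOn w U) (hw0 : ∀ t ∈ U, 0 ≤ w t)
    {Φ : ℝ → E × E × E → F} (hΦ : ContinuousOn (Function.uncurry Φ) (U ×ˢ univ))
    (hΦ0 : ∀ t, Φ t 0 = 0) {η : ℝ} (hη : 0 < η) :
    ∀ᶠ ε in 𝓝[>] 0,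
      ∫ t in U, ‖Φ t (twoJet (truncate g a b ε) t)‖ ^ 2 * w t ≤
        2 * (∫ t in a..b, ‖Φ t (twoJet g t)‖ ^ 2 * w t) + η ∧
      ∫ t in a..b, ‖Φ t (twoJet g t)‖ ^ 2 * w t ≤
        2 * ∫ t in U, ‖Φ t (twoJet (truncate g a b ε) t)‖ ^ 2 * w t := by
  have hG : ContinuousOn (Function.uncurry fun t v ↦ ‖Φ t v‖ ^ 2 * w t) (U ×ˢ univ) :=
    (hΦ.norm.pow 2).mul (hw.comp continuousOn_fst fun x hx ↦ hx.1)
  have hX : 0 ≤ ∫ t in a..b, ‖Φ t (twoJet g t)‖ ^ 2 * w t :=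
    intervalIntegral.integral_nonneg hab fun t ht ↦ mul_nonneg (sq_nonneg _) (hw0 t (habU ht))
  filter_upwards [eventually_integral_twoJet_truncate_approx hab hU habU hg ha ha' hb hb' hG
    (fun t ↦ by simp [hΦ0]) (fun t ht v ↦ mul_nonneg (sq_nonneg _) (hw0 t ht)) hη] with ε h
  constructor <;> linarith [h.1, h.2]

end truncate

theorem continuousOn_coth : ContinuousOn coth {0}ᶜ :=
  continuous_cosh.continuousOn.div continuous_sinh.continuousOn fun _ ht ↦ sinh_ne_zero.2 ht

theorem continuousOn_uncurry_coth_symbol (c lam : ℝ) :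
    ContinuousOn (Function.uncurry fun t (v : ℂ × ℂ × ℂ) ↦
      v.2.2 + ((c * coth t : ℝ) : ℂ) * v.2.1 + (lam : ℂ) * v.1) (Ioi 0 ×ˢ univ) := by
  have hc : ContinuousOn (fun p : ℝ × ℂ × ℂ × ℂ ↦ coth p.1) (Ioi 0 ×ˢ univ) :=
    continuousOn_coth.comp continuousOn_fst fun p hp ↦ (ne_of_gt hp.1 : p.1 ≠ 0)
  simp only [Function.uncurry_def]
  fun_prop

theorem contDiffOn_sinh_rpow_mul_cexp (p β : ℝ) :
    ContDiffOn ℝ ∞ (fun t : ℝ ↦ ((sinh t ^ p : ℝ) : ℂ) * Complex.exp (Complex.I * β * t))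
      (Ioi 0) := by
  refine ContDiffOn.mul (Complex.ofRealCLM.contDiff.comp_contDiffOn fun t ht ↦ ?_)
    ((ContDiff.restrict_scalars ℝ (𝕜' := ℂ) Complex.contDiff_exp).comp
      (contDiff_const.mul Complex.ofRealCLM.contDiff)).contDiffOn
  exact (contDiff_sinh.contDiffAt.rpow_const_of_ne (sinh_pos_iff.2 ht).ne').contDiffWithinAt

theorem hasDerivAt_mul_ofReal_sq_of_eq_zero {φ : ℝ → ℂ} {σ : ℝ → ℝ} {p : ℝ}
    (hφ : DifferentiableAt ℝ φ p) (hσ : DifferentiableAt ℝ σ p) (hp : σ p = 0) :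
    HasDerivAt (fun t ↦ φ t * ((σ t ^ 2 : ℝ) : ℂ)) 0 p :=
  (hφ.hasDerivAt.fun_mul (hσ.hasDerivAt.fun_pow 2).ofReal_comp).congr_deriv (by simp [hp])

theorem statement16_general
    (m : ℕ) (lam : ℝ)
    (β : ℝ)
    (ψ : ℝ → ℂ)
    (hψ : ∀ t : ℝ, ψ t =
      ((Real.sinh t ^ (-(((m : ℝ) - 1) / 2)) : ℝ) : ℂ) * Complex.exp (Complex.I * β * t))
    (F : ℝ → ℝ → ℂ)
    (hF : ∀ R t : ℝ, F R t = ψ t * ((Real.sin (2 * π / R * (t - R / 2)) ^ 2 : ℝ) : ℂ)) :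
    ∀ R : ℝ, 0 < R → ∀ η : ℝ, 0 < η →
      ∃ υ : ℝ → ℂ, ContDiff ℝ (⊤ : ℕ∞) υ ∧ HasCompactSupport υ ∧ tsupport υ ⊆ Set.Ioi 0 ∧
        ((∫ t in Set.Ioi (0 : ℝ),
            Norm.norm (deriv (deriv υ) t + ((((m : ℝ) - 1) * coth t : ℝ) : ℂ) * deriv υ t
              + (lam : ℂ) * υ t) ^ 2 * Real.sinh t ^ (m - 1))
          ≤ 2 * (∫ t in (R / 2)..R,
              Norm.norm (deriv (deriv (F R)) t
                + ((((m : ℝ) - 1) * coth t : ℝ) : ℂ) * deriv (F R) t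
                + (lam : ℂ) * F R t) ^ 2 * Real.sinh t ^ (m - 1)) + η) ∧
        ((∫ t in (R / 2)..R, Norm.norm (F R t) ^ 2 * Real.sinh t ^ (m - 1))
          ≤ 2 * ∫ t in Set.Ioi (0 : ℝ), Norm.norm (υ t) ^ 2 * Real.sinh t ^ (m - 1)) ∧
        ((∫ t in Set.Ioi (0 : ℝ), Norm.norm (deriv υ t) ^ 2 * Real.sinh t ^ (m - 1))
          ≤ 2 * (∫ t in (R / 2)..R,
              Norm.norm (deriv (F R) t) ^ 2 * Real.sinh t ^ (m - 1)) + η) ∧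
        ((∫ t in Set.Ioi (0 : ℝ), Norm.norm (deriv (deriv υ) t) ^ 2 * Real.sinh t ^ (m - 1))
          ≤ 2 * (∫ t in (R / 2)..R,
              Norm.norm (deriv (deriv (F R)) t) ^ 2 * Real.sinh t ^ (m - 1)) + η) := by
  intro R hR η hη
  have hsub : Icc (R / 2) R ⊆ Ioi 0 := fun t ht ↦ lt_of_lt_of_le (by positivity) ht.1
  have hψ' : ContDiffOn ℝ ∞ ψ (Ioi 0) := by
    rw [show ψ = _ from funext hψ]; exact contDiffOn_sinh_rpow_mul_cexp _ _
  have hFR : F R = fun t ↦ ψ t * ((sin (2 * π / R * (t - R / 2)) ^ 2 : ℝ) : ℂ) := funext (hF R)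
  have hg : ContDiffOn ℝ ∞ (F R) (Ioi 0) := hFR ▸ hψ'.mul (Complex.ofRealCLM.contDiff.comp
    (show ContDiff ℝ ∞ fun t ↦ sin (2 * π / R * (t - R / 2)) ^ 2 by fun_prop)).contDiffOn
  have hvanish : ∀ p > 0, sin (2 * π / R * (p - R / 2)) = 0 → F R p = 0 ∧ deriv (F R) p = 0 :=
    fun p hp hσ ↦ ⟨by simp [hFR, hσ], hFR ▸ (hasDerivAt_mul_ofReal_sq_of_eq_zero
      ((hψ'.differentiableOn (by simp)).differentiableAt (Ioi_mem_nhds hp)) (by fun_prop) hσ).deriv⟩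
  obtain ⟨ha, ha'⟩ := hvanish (R / 2) (by positivity) (by simp)
  obtain ⟨hb, hb'⟩ := hvanish R hR
    (by rw [show 2 * π / R * (R - R / 2) = π by field_simp; ring, sin_pi])
  have approx := fun (Φ : ℝ → ℂ × ℂ × ℂ → ℂ) hΦ hΦ0 ↦ eventually_weighted_norm_sq_truncate_approx
    (by linarith) isOpen_Ioi hsub hg ha ha' hb hb' (w := fun t ↦ sinh t ^ (m - 1)) (by fun_prop)
    (fun t ht ↦ pow_nonneg (sinh_pos_iff.2 ht).le _) (Φ := Φ) hΦ hΦ0 hη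
  obtain ⟨ε, ⟨hυ, hυc, hυs⟩, hL, h0, h1, h2⟩ :=
    ((eventually_contDiff_truncate (by linarith) isOpen_Ioi hsub hg).and
      ((approx _ (continuousOn_uncurry_coth_symbol _ lam) fun _ ↦ by simp).and
        ((approx (fun _ v ↦ v.1) (by fun_prop) fun _ ↦ rfl).and
          ((approx (fun _ v ↦ v.2.1) (by fun_prop) fun _ ↦ rfl).and
            (approx (fun _ v ↦ v.2.2) (by fun_prop) fun _ ↦ rfl))))).exists
  exact ⟨truncate (F R) (R / 2) R ε, hυ, hυc, hυs, hL.1, h0.2, h1.1, h2.1⟩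

/-- for an integer `m ≥ 2`, a real `λ > (m−1)²/4`, `β = √(λ − (m−1)²/4)`,
`ψ(t) = sinh(t)^{−(m−1)/2} e^{iβt}` and `F_R(t) = ψ(t) sin²((2π/R)(t − R/2))`: for every
`R > 0` and every `η > 0` there is a smooth compactly supported `υ : ℝ → ℂ` with support
in `(0, +∞)` satisfying the four integral inequalities (i)–(iv). -/
theorem statement16
    (m : ℕ) (hm : 2 ≤ m) (lam : ℝ) (hlam : ((m : ℝ) - 1) ^ 2 / 4 < lam)
    (β : ℝ) (hβ : β = Real.sqrt (lam - ((m : ℝ) - 1) ^ 2 / 4))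
    (ψ : ℝ → ℂ)
    (hψ : ∀ t : ℝ, ψ t =
      ((Real.sinh t ^ (-(((m : ℝ) - 1) / 2)) : ℝ) : ℂ) * Complex.exp (Complex.I * β * t))
    (F : ℝ → ℝ → ℂ)
    (hF : ∀ R t : ℝ, F R t = ψ t * ((Real.sin (2 * π / R * (t - R / 2)) ^ 2 : ℝ) : ℂ)) :
    ∀ R : ℝ, 0 < R → ∀ η : ℝ, 0 < η →
      ∃ υ : ℝ → ℂ, ContDiff ℝ (⊤ : ℕ∞) υ ∧ HasCompactSupport υ ∧ tsupport υ ⊆ Set.Ioi 0 ∧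
        ((∫ t in Set.Ioi (0 : ℝ),
            Norm.norm (deriv (deriv υ) t + ((((m : ℝ) - 1) * coth t : ℝ) : ℂ) * deriv υ t
              + (lam : ℂ) * υ t) ^ 2 * Real.sinh t ^ (m - 1))
          ≤ 2 * (∫ t in (R / 2)..R,
              Norm.norm (deriv (deriv (F R)) t
                + ((((m : ℝ) - 1) * coth t : ℝ) : ℂ) * deriv (F R) t
                + (lam : ℂ) * F R t) ^ 2 * Real.sinh t ^ (m - 1)) + η) ∧
        ((∫ t in (R / 2)..R, Norm.norm (F R t) ^ 2 * Real.sinh t ^ (m - 1))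
          ≤ 2 * ∫ t in Set.Ioi (0 : ℝ), Norm.norm (υ t) ^ 2 * Real.sinh t ^ (m - 1)) ∧
        ((∫ t in Set.Ioi (0 : ℝ), Norm.norm (deriv υ t) ^ 2 * Real.sinh t ^ (m - 1))
          ≤ 2 * (∫ t in (R / 2)..R,
              Norm.norm (deriv (F R) t) ^ 2 * Real.sinh t ^ (m - 1)) + η) ∧
        ((∫ t in Set.Ioi (0 : ℝ), Norm.norm (deriv (deriv υ) t) ^ 2 * Real.sinh t ^ (m - 1))
          ≤ 2 * (∫ t in (R / 2)..R,
              Norm.norm (deriv (deriv (F R)) t) ^ 2 * Real.sinh t ^ (m - 1)) + η) :=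
  statement16_general m lam β ψ hψ F hF
end
end
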